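/- arXiv:2207.04114 — 9 statements merged into one kernel-verified Lean document; each statement's English description precedes it below -/
import Mathlib

section
/- If f is a system of polynomials f_1,...,f_r in F_q[x_1,...,x_n] with total degree d = deg(f_1)+...+deg(f_r) < n, and the zero set of f in F_q^n is nonempty, then the number of common zeros is at least q^(n-d). -/
open MvPolynomial Finset

lemma warM {q : ℕ} (hq : 2 ≤ q) {D1 D2 : ℕ} (h : D1 ≤ D2) :
    (q - D2 % (q-1)) * q ^ (D1 / (q-1)) ≤ (q - D1 % (q-1)) * q ^ (D2 / (q-1)) := by
  induction D2, h using Nat.le_induction with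
  | base => exact le_refl _
  | succ D2 hle ih =>
    have hm : 0 < q - 1 := by omega
    have hmod := Nat.div_add_mod D2 (q-1)
    set r := D2 % (q-1) with hr
    set k := D2 / (q-1) with hk
    have hrlt : r < q - 1 := Nat.mod_lt _ hm
    by_cases hwrap : r + 1 = q - 1
    · have e : D2 + 1 = (q-1)*(k+1) := by
        have : (q-1)*(k+1) = (q-1)*k + (q-1) := by ring
        omega
      have e1 : (D2+1) % (q-1) = 0 := by rw [e, Nat.mul_mod_right]
      have e2 : (D2+1) / (q-1) = k + 1 := by rw [e, Nat.mul_div_cancel_left _ hm]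
      rw [e1, e2, Nat.sub_zero]
      calc q * q ^ (D1 / (q-1)) = (1 * q ^ (D1/(q-1))) * q := by ring
        _ ≤ ((q - r) * q ^ (D1/(q-1))) * q := by
            have : (1:ℕ) ≤ q - r := by omega
            exact Nat.mul_le_mul_right _ (Nat.mul_le_mul_right _ this)
        _ ≤ ((q - D1 % (q-1)) * q ^ k) * q := Nat.mul_le_mul_right _ ih
        _ = (q - D1 % (q-1)) * q ^ (k+1) := by ring
    · have e : D2 + 1 = (q-1)*k + (r+1) := by omega
      have e1 : (D2+1) % (q-1) = r + 1 := by
        rw [e, Nat.mul_add_mod, Nat.mod_eq_of_lt (by omega)]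
      have e2 : (D2+1) / (q-1) = k := by
        rw [e, Nat.mul_add_div hm, Nat.div_eq_of_lt (by omega), Nat.add_zero]
      rw [e1, e2]
      refine le_trans ?_ ih
      exact Nat.mul_le_mul_right _ (by omega)

lemma warKey1 {q b t : ℕ} (ht : t ≤ b) (hb : b ≤ q) :
    (q - b) * q ≤ (q - t) * (q - (b - t)) := by
  have hbt : b - t ≤ q := le_trans (Nat.sub_le b t) hb
  have ht' : t ≤ q := le_trans ht hb
  zify [ht, hb, hbt, ht']
  nlinarith [mul_nonneg (by omega : (0:ℤ) ≤ (b:ℤ) - t) (by omega : (0:ℤ) ≤ (t:ℤ))]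

lemma warKey2 {q b t : ℕ} (hb : b < t) (ht : t ≤ q - 1) (hq : 2 ≤ q) :
    (q - b) ≤ (q - t) * (q - ((q-1) - (t - b))) := by
  have h1 : q - ((q-1) - (t - b)) = t - b + 1 := by omega
  rw [h1]
  have h2 : t - b ≤ (q-t)*(t-b) := Nat.le_mul_of_pos_left _ (by omega)
  have h3 : (q-t)*(t-b+1) = (q-t)*(t-b) + (q-t) := by ring
  omega

lemma warArith {q : ℕ} (hq : 2 ≤ q) {t D D' : ℕ} (ht : t ≤ q - 1) (hD : D' + t ≤ D) :
    (q - D % (q-1)) * q ^ (D' / (q-1) + 1) ≤ (q - t) * ((q - D' % (q-1)) * q ^ (D / (q-1))) := by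
  have hm : 0 < q - 1 := by omega
  have hM := warM hq (show D' ≤ D - t by omega)
  obtain ⟨a, ha⟩ : ∃ a, D / (q-1) = a := ⟨_, rfl⟩
  obtain ⟨b, hb⟩ : ∃ b, D % (q-1) = b := ⟨_, rfl⟩
  have hmod : (q-1)*a + b = D := by rw [← ha, ← hb]; exact Nat.div_add_mod D (q-1)
  have hblt : b < q-1 := by rw [← hb]; exact Nat.mod_lt _ hm
  rw [ha, hb]
  by_cases hcase : t ≤ b
  · have e : D - t = (q-1)*a + (b - t) := by omega
    have e1 : (D-t) % (q-1) = b - t := by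
      rw [e, Nat.mul_add_mod, Nat.mod_eq_of_lt (by omega)]
    have e2 : (D-t) / (q-1) = a := by
      rw [e, Nat.mul_add_div hm, Nat.div_eq_of_lt (by omega), Nat.add_zero]
    rw [e1, e2] at hM
    have key : (q - b) * q ≤ (q - t) * (q - (b - t)) := warKey1 hcase (by omega)
    calc (q - b) * q ^ (D'/(q-1)+1) = ((q-b)*q) * q ^ (D'/(q-1)) := by ring
      _ ≤ ((q-t)*(q - (b-t))) * q ^ (D'/(q-1)) := Nat.mul_le_mul_right _ key
      _ = (q-t) * ((q - (b-t)) * q ^ (D'/(q-1))) := by ring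
      _ ≤ (q-t) * ((q - D'%(q-1)) * q ^ a) := Nat.mul_le_mul_left _ hM
  · push_neg at hcase
    have ha1 : 1 ≤ a := by
      by_contra h0
      push_neg at h0
      have hz : (q-1)*a = 0 := by
        have haz : a = 0 := by omega
        rw [haz]; ring
      omega
    obtain ⟨a1, rfl⟩ : ∃ a1, a = a1 + 1 := ⟨a - 1, by omega⟩
    have expand : (q-1)*(a1+1) = (q-1)*a1 + (q-1) := by ring
    have e : D - t = (q-1)*a1 + ((q-1) - (t - b)) := by omega
    have e1 : (D-t) % (q-1) = (q-1) - (t - b) := by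
      rw [e, Nat.mul_add_mod, Nat.mod_eq_of_lt (by omega)]
    have e2 : (D-t) / (q-1) = a1 := by
      rw [e, Nat.mul_add_div hm, Nat.div_eq_of_lt (by omega), Nat.add_zero]
    rw [e1, e2] at hM
    have key : (q - b) ≤ (q - t) * (q - ((q-1) - (t - b))) := warKey2 hcase ht hq
    calc (q-b) * q ^ (D'/(q-1)+1)
        ≤ ((q-t) * (q - ((q-1)-(t-b)))) * q ^ (D'/(q-1)+1) := Nat.mul_le_mul_right _ key
      _ = (q-t) * (((q - ((q-1)-(t-b))) * q ^ (D'/(q-1))) * q) := by ring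
      _ ≤ (q-t) * (((q - D'%(q-1)) * q ^ a1) * q) :=
            Nat.mul_le_mul_left _ (Nat.mul_le_mul_right _ hM)
      _ = (q-t) * ((q - D'%(q-1)) * q ^ (a1+1)) := by ring

lemma warFinal (q n d D NZ : ℕ) (hq : 2 ≤ q) (hdn : d < n) (hD : D ≤ (q-1)*d)
    (key : (q - D % (q-1)) * q^n ≤ NZ * q^(D/(q-1)+1)) : q^(n-d) ≤ NZ := by
  have hm : 0 < q - 1 := by omega
  obtain ⟨a, ha⟩ : ∃ a, D / (q-1) = a := ⟨_, rfl⟩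
  obtain ⟨b, hb⟩ : ∃ b, D % (q-1) = b := ⟨_, rfl⟩
  have hmod : (q-1)*a + b = D := by rw [← ha, ← hb]; exact Nat.div_add_mod D (q-1)
  have hblt : b < q-1 := by rw [← hb]; exact Nat.mod_lt _ hm
  rw [ha, hb] at key
  have had : a ≤ d := by
    rw [← ha]
    have := Nat.div_le_div_right (c := q - 1) hD
    rwa [Nat.mul_div_cancel_left _ hm] at this
  have step : q^(n-d) * q^(a+1) ≤ (q - b) * q^n := by
    rcases Nat.eq_zero_or_pos b with hb0 | hb1
    · rw [hb0, Nat.sub_zero]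
      calc q^(n-d)*q^(a+1) = q^((n-d)+(a+1)) := by rw [← pow_add]
        _ ≤ q^(n+1) := Nat.pow_le_pow_right (by omega) (by omega)
        _ = q * q^n := by ring
    · have hadlt : a < d := by
        by_contra hcon
        push_neg at hcon
        have h2 : (q-1)*d ≤ (q-1)*a := Nat.mul_le_mul_left _ hcon
        omega
      calc q^(n-d)*q^(a+1) = q^((n-d)+(a+1)) := by rw [← pow_add]
        _ ≤ q^n := Nat.pow_le_pow_right (by omega) (by omega)
        _ ≤ (q-b)*q^n := Nat.le_mul_of_pos_left _ (by omega)
  exact Nat.le_of_mul_le_mul_right (le_trans step key) (Nat.pow_pos (by omega))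

def rexp (q a : ℕ) : ℕ := if a = 0 then 0 else (a - 1) % (q - 1) + 1

lemma rexp_zero (q : ℕ) : rexp q 0 = 0 := rfl

lemma rexp_le_self (q a : ℕ) : rexp q a ≤ a := by
  unfold rexp; split
  · omega
  · have := Nat.mod_le (a-1) (q-1); omega

lemma rexp_le (q a : ℕ) (hq : 2 ≤ q) : rexp q a ≤ q - 1 := by
  unfold rexp; split
  · omega
  · have := Nat.mod_lt (a-1) (y := q-1) (by omega); omega

lemma pow_rexp {F : Type*} [Field F] [Fintype F] (y : F) (a : ℕ) :
    y ^ (rexp (Fintype.card F) a) = y ^ a := by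
  have hq : 2 ≤ Fintype.card F := Fintype.one_lt_card
  rcases eq_or_ne a 0 with rfl | ha
  · rfl
  rcases eq_or_ne y 0 with rfl | hy
  · rw [zero_pow ha, zero_pow]
    unfold rexp; simp [ha]
  · have h1 : y ^ (Fintype.card F - 1) = 1 := FiniteField.pow_card_sub_one_eq_one y hy
    have key : a = (Fintype.card F - 1) * ((a-1)/(Fintype.card F - 1))
        + rexp (Fintype.card F) a := by
      unfold rexp
      simp only [ha, if_false]
      have := Nat.div_add_mod (a-1) (Fintype.card F - 1)
      omega
    conv_rhs => rw [key]
    rw [pow_add, pow_mul, h1, one_pow, one_mul]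

noncomputable def redPoly {n : ℕ} {F : Type*} [Field F] [Fintype F]
    (g : MvPolynomial (Fin n) F) : MvPolynomial (Fin n) F :=
  ∑ α ∈ g.support, monomial (Finsupp.mapRange (rexp (Fintype.card F)) rfl α) (g.coeff α)

lemma eval_redPoly {n : ℕ} {F : Type*} [Field F] [Fintype F]
    (g : MvPolynomial (Fin n) F) (x : Fin n → F) :
    eval x (redPoly g) = eval x g := by
  rw [redPoly, map_sum, eval_eq' x g]
  refine Finset.sum_congr rfl fun α hα => ?_
  rw [eval_monomial]
  congr 1
  rw [Finsupp.prod_fintype _ _ (fun i => pow_zero (x i))]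
  exact Finset.prod_congr rfl fun i _ => by exact pow_rexp (x i) (α i)

lemma totalDegree_redPoly_le {n : ℕ} {F : Type*} [Field F] [Fintype F]
    (g : MvPolynomial (Fin n) F) : (redPoly g).totalDegree ≤ g.totalDegree := by
  refine (totalDegree_finset_sum _ _).trans (Finset.sup_le fun α hα => ?_)
  refine (totalDegree_monomial_le _ _).trans (le_trans ?_ (le_totalDegree hα))
  rw [Finsupp.sum_fintype _ _ (fun _ => rfl), Finsupp.sum_fintype _ _ (fun _ => rfl)]
  exact Finset.sum_le_sum fun i _ => by
    exact rexp_le_self _ (α i)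

lemma degreeOf_redPoly_le {n : ℕ} {F : Type*} [Field F] [Fintype F]
    (g : MvPolynomial (Fin n) F) (i : Fin n) :
    (redPoly g).degreeOf i ≤ Fintype.card F - 1 := by
  have hq : 2 ≤ Fintype.card F := Fintype.one_lt_card
  rw [degreeOf_le_iff]
  intro s hs
  obtain ⟨α, hα, hs2⟩ := Finset.mem_biUnion.mp (MvPolynomial.support_sum hs)
  have := support_monomial_subset hs2
  rw [Finset.mem_singleton] at this
  subst this
  exact rexp_le _ (α i) hq

open scoped Classical in
lemma warKey {F : Type*} [Field F] [Fintype F] :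
    ∀ (n : ℕ) (g : MvPolynomial (Fin n) F), g ≠ 0 →
    (∀ i, g.degreeOf i ≤ Fintype.card F - 1) →
    (Fintype.card F - g.totalDegree % (Fintype.card F - 1)) * Fintype.card F ^ n ≤
      (Finset.univ.filter fun x : Fin n → F => eval x g ≠ 0).card *
        Fintype.card F ^ (g.totalDegree / (Fintype.card F - 1) + 1) := by
  classical
  have hq2 : 2 ≤ Fintype.card F := Fintype.one_lt_card
  intro n
  induction n with
  | zero =>
    intro g hg _
    have hgC : g = C (g.coeff 0) := g.eq_C_of_isEmpty
    have hc : g.coeff 0 ≠ 0 := fun h => hg (by rw [hgC, h, map_zero])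
    have hdeg : g.totalDegree = 0 := by rw [hgC]; exact totalDegree_C _
    have hfilter : (Finset.univ.filter fun x : Fin 0 → F => eval x g ≠ 0) = Finset.univ := by
      refine Finset.filter_true_of_mem fun x _ => ?_
      rw [hgC, eval_C]; exact hc
    rw [hdeg, hfilter, Nat.zero_mod, Nat.zero_div, Nat.sub_zero]
    have hcard : (Finset.univ : Finset (Fin 0 → F)).card = 1 := by
      rw [Finset.card_univ]
      simp
    rw [hcard, pow_zero, pow_one, mul_one, one_mul]
  | succ n ih =>
    intro g hg hred
    set q := Fintype.card F with hqdef
    set p := finSuccEquiv F n g with hp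
    have hp0 : p ≠ 0 := by
      intro h0
      apply hg
      have h1 := congrArg (finSuccEquiv F n).symm (hp ▸ h0)
      simpa using h1
    set t := p.natDegree with htdef
    have hh0 : p.coeff t ≠ 0 := by
      rw [htdef, ← Polynomial.leadingCoeff]
      exact Polynomial.leadingCoeff_ne_zero.mpr hp0
    set h := p.coeff t with hhdef
    have ht_le : t ≤ q - 1 := by
      rw [htdef, hp, natDegree_finSuccEquiv]; exact hred 0
    have hD't : h.totalDegree + t ≤ g.totalDegree := by
      have := totalDegree_coeff_finSuccEquiv_add_le g t (by rw [← hp]; exact hh0)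
      rw [← hp] at this
      exact this
    have hredh : ∀ i, h.degreeOf i ≤ q - 1 := fun i => by
      have := degreeOf_coeff_finSuccEquiv g i t
      rw [← hp] at this
      exact le_trans this (hred i.succ)
    have IH := ih h hh0 hredh
    set A := Finset.univ.filter fun x' : Fin n → F => eval x' h ≠ 0 with hA
    set G := Finset.univ.filter fun x : Fin (n+1) → F => eval x g ≠ 0 with hG
    -- counting step
    have count : (q - t) * A.card ≤ G.card := by
      set S : (Fin n → F) → Finset F := fun x' =>
        Finset.univ.filter fun y => Polynomial.eval y (p.map (eval x')) ≠ 0 with hS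
      have hScard : ∀ x' ∈ A, q - t ≤ (S x').card := by
        intro x' hx'
        have hx'h : eval x' h ≠ 0 := by
          rw [hA] at hx'; exact (Finset.mem_filter.mp hx').2
        have hcoeff : (p.map (eval x')).coeff t ≠ 0 := by
          rwa [Polynomial.coeff_map]
        have hpx0 : p.map (eval x') ≠ 0 := fun h0 => hcoeff (by rw [h0]; simp)
        have hzero : (Finset.univ.filter fun y => Polynomial.eval y (p.map (eval x')) = 0).card
            ≤ t := by
          have hsub : (Finset.univ.filter fun y => Polynomial.eval y (p.map (eval x')) = 0)
              ⊆ (p.map (eval x')).roots.toFinset := by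
            intro y hy
            rw [Multiset.mem_toFinset, Polynomial.mem_roots hpx0]
            exact (Finset.mem_filter.mp hy).2
          calc _ ≤ (p.map (eval x')).roots.toFinset.card := Finset.card_le_card hsub
            _ ≤ Multiset.card (p.map (eval x')).roots := Multiset.toFinset_card_le _
            _ ≤ (p.map (eval x')).natDegree := Polynomial.card_roots' _
            _ ≤ t := Polynomial.natDegree_map_le
        have hsplit := Finset.card_filter_add_card_filter_not
          (s := (Finset.univ : Finset F))
          (p := fun y => Polynomial.eval y (p.map (eval x')) = 0)
        have hcardF : (Finset.univ : Finset F).card = q := by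
          rw [Finset.card_univ]
        have : (S x').card = q - (Finset.univ.filter
            fun y => Polynomial.eval y (p.map (eval x')) = 0).card := by
          rw [hS]
          simp only [ne_eq]
          omega
        omega
      calc (q - t) * A.card = ∑ _x' ∈ A, (q - t) := by
            rw [Finset.sum_const, smul_eq_mul, mul_comm]
        _ ≤ ∑ x' ∈ A, (S x').card := Finset.sum_le_sum hScard
        _ = (A.sigma S).card := (Finset.card_sigma _ _).symm
        _ ≤ G.card := by
            refine Finset.card_le_card_of_injOn (fun z => Fin.cons z.2 z.1) ?_ ?_
            · intro z hz
              rw [Finset.mem_coe, Finset.mem_sigma] at hz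
              rw [Finset.mem_coe, hG, Finset.mem_filter]
              refine ⟨Finset.mem_univ _, ?_⟩
              rw [eval_eq_eval_mv_eval', ← hp]
              have := hz.2
              rw [hS] at this
              exact (Finset.mem_filter.mp this).2
            · intro z1 _ z2 _ heq
              have h0 : z1.2 = z2.2 := by
                have := congrFun heq 0
                simpa using this
              have hs : z1.1 = z2.1 := funext fun i => by
                have := congrFun heq i.succ
                simpa using this
              exact Sigma.ext hs (by rw [h0])
    -- arithmetic assembly
    have AR := warArith hq2 ht_le hD't
    refine Nat.le_of_mul_le_mul_right ?_
      (Nat.pow_pos (show 0 < q by omega) : 0 < q ^ (h.totalDegree / (q-1) + 1))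
    calc (q - g.totalDegree % (q-1)) * q ^ (n+1) * q ^ (h.totalDegree/(q-1) + 1)
        = ((q - g.totalDegree % (q-1)) * q ^ (h.totalDegree/(q-1) + 1)) * q ^ (n+1) := by ring
      _ ≤ ((q - t) * ((q - h.totalDegree % (q-1)) * q ^ (g.totalDegree/(q-1)))) * q ^ (n+1) :=
            Nat.mul_le_mul_right _ AR
      _ = (q - t) * (((q - h.totalDegree % (q-1)) * q ^ n) * (q ^ (g.totalDegree/(q-1) + 1))) := by
            ring
      _ ≤ (q - t) * ((A.card * q ^ (h.totalDegree/(q-1) + 1)) * (q ^ (g.totalDegree/(q-1) + 1))) :=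
            Nat.mul_le_mul_left _ (Nat.mul_le_mul_right _ IH)
      _ = ((q - t) * A.card) * q ^ (g.totalDegree/(q-1) + 1) * q ^ (h.totalDegree/(q-1) + 1) := by
            ring
      _ ≤ G.card * q ^ (g.totalDegree/(q-1) + 1) * q ^ (h.totalDegree/(q-1) + 1) :=
            Nat.mul_le_mul_right _ (Nat.mul_le_mul_right _ count)

open scoped Classical in
theorem stmt_0 (q n r : ℕ) (F : Type*) [Field F] [Fintype F]
    (hq : Fintype.card F = q)
    (f : Fin r → MvPolynomial (Fin n) F)
    (d : ℕ) (hd : d = ∑ i, (f i).totalDegree) (hdn : d < n)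
    (Z : Set (Fin n → F))
    (hZ : Z = {x | ∀ i, MvPolynomial.eval x (f i) = 0})
    (hne : Z.Nonempty) :
    q ^ (n - d) ≤ Z.ncard := by
  subst hq hZ
  have hq2 : 2 ≤ Fintype.card F := Fintype.one_lt_card
  set P : MvPolynomial (Fin n) F := ∏ i, (1 - f i ^ (Fintype.card F - 1)) with hP
  have hPeval : ∀ x : Fin n → F, eval x P = if (∀ i, eval x (f i) = 0) then 1 else 0 := by
    intro x
    rw [hP, map_prod]
    split_ifs with hx
    · apply Finset.prod_eq_one
      intro i _
      rw [map_sub, map_one, map_pow, hx i,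
        zero_pow (show Fintype.card F - 1 ≠ 0 by omega), sub_zero]
    · push_neg at hx
      obtain ⟨i, hi⟩ := hx
      apply Finset.prod_eq_zero (Finset.mem_univ i)
      rw [map_sub, map_one, map_pow, FiniteField.pow_card_sub_one_eq_one _ hi, sub_self]
  have hPdeg : P.totalDegree ≤ (Fintype.card F - 1) * d := by
    rw [hP, hd, Finset.mul_sum]
    refine (totalDegree_finset_prod _ _).trans (Finset.sum_le_sum fun i _ => ?_)
    refine (totalDegree_sub _ _).trans ?_
    rw [totalDegree_one, Nat.max_eq_right (Nat.zero_le _)]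
    exact totalDegree_pow _ _
  set g := redPoly P with hgdef
  have hgeval : ∀ x, eval x g = eval x P := fun x => eval_redPoly P x
  have hZset : {x : Fin n → F | ∀ i, eval x (f i) = 0}
      = ↑(Finset.univ.filter fun x : Fin n → F => eval x g ≠ 0) := by
    ext x
    simp only [Set.mem_setOf_eq, Finset.coe_filter, Finset.mem_univ, true_and]
    rw [hgeval x, hPeval x]
    constructor
    · intro hx
      rw [if_pos hx]; exact one_ne_zero
    · intro hx
      by_contra hc
      rw [if_neg hc] at hx
      exact hx rfl
  obtain ⟨x₀, hx₀⟩ := hne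
  simp only [Set.mem_setOf_eq] at hx₀
  have hg0 : g ≠ 0 := by
    intro h0
    have h1 := hgeval x₀
    rw [h0, map_zero, hPeval x₀, if_pos hx₀] at h1
    exact one_ne_zero h1.symm
  have key := warKey n g hg0 (fun i => degreeOf_redPoly_le P i)
  have hDd : g.totalDegree ≤ (Fintype.card F - 1) * d :=
    le_trans (totalDegree_redPoly_le P) hPdeg
  rw [hZset, Set.ncard_coe_finset]
  exact warFinal (Fintype.card F) n d g.totalDegree _ hq2 hdn hDd key
end

section
/- Let f be a system of polynomials in F_q[x_1,...,x_n] of total degree d and let L ⊆ F_q^n be an affine subspace with 2 ≤ N(f,L) ≤ q-1. Then dim(L) ≤ d. -/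
set_option linter.unusedSectionVars false
set_option maxHeartbeats 1000000

open MvPolynomial Finset


section DegLemmas
variable {F : Type*} [CommRing F]

private lemma td_prod_le' {l m : ℕ} (A : Fin m → MvPolynomial (Fin l) F)
    (hA : ∀ i, (A i).totalDegree ≤ 1) (e : Fin m →₀ ℕ) :
    (∏ i, A i ^ e i).totalDegree ≤ ∑ i, e i := by
  refine (totalDegree_finset_prod _ _).trans ?_
  refine Finset.sum_le_sum fun i _ => ?_
  calc (A i ^ e i).totalDegree ≤ e i * (A i).totalDegree := totalDegree_pow _ _
    _ ≤ e i * 1 := Nat.mul_le_mul_left _ (hA i)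
    _ = e i := Nat.mul_one _

private lemma td_pow_sub' {l : ℕ} (x y : MvPolynomial (Fin l) F) (hx : x.totalDegree ≤ 1)
    (hy : y.totalDegree ≤ 1) (c : F) (hxy : x - y = C c) (b : ℕ) :
    (x ^ b - y ^ b).totalDegree ≤ b - 1 := by
  rw [← geom_sum₂_mul x y b, hxy]
  refine (totalDegree_mul _ _).trans ?_
  rw [totalDegree_C, Nat.add_zero]
  refine (totalDegree_finset_sum _ _).trans ?_
  refine Finset.sup_le fun i hi => ?_
  rw [Finset.mem_range] at hi
  calc (x ^ i * y ^ (b - 1 - i)).totalDegree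
      ≤ (x ^ i).totalDegree + (y ^ (b - 1 - i)).totalDegree := totalDegree_mul _ _
    _ ≤ i * x.totalDegree + (b - 1 - i) * y.totalDegree :=
        Nat.add_le_add (totalDegree_pow _ _) (totalDegree_pow _ _)
    _ ≤ i * 1 + (b - 1 - i) * 1 :=
        Nat.add_le_add (Nat.mul_le_mul_left _ hx) (Nat.mul_le_mul_left _ hy)
    _ ≤ b - 1 := by omega

private lemma td_delta' {l m : ℕ} (A A' : Fin m → MvPolynomial (Fin l) F)
    (hA : ∀ i, (A i).totalDegree ≤ 1) (hA' : ∀ i, (A' i).totalDegree ≤ 1)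
    (hd : ∀ i, ∃ c : F, A i - A' i = C c) (e : Fin m →₀ ℕ) :
    (∏ i, A i ^ e i - ∏ i, A' i ^ e i) = 0 ∨
      (∏ i, A i ^ e i - ∏ i, A' i ^ e i).totalDegree < ∑ i, e i := by
  induction e using Finsupp.induction with
  | zero => left; simp
  | single_add a b f ha hb ih =>
    right
    have hsplit : ∀ B : Fin m → MvPolynomial (Fin l) F,
        (∏ i, B i ^ (Finsupp.single a b + f) i) = B a ^ b * ∏ i, B i ^ f i := by
      intro B
      have : ∀ i, B i ^ ((Finsupp.single a b + f) i) = B i ^ (Finsupp.single a b) i * B i ^ f i := by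
        intro i; rw [← pow_add]; rfl
      rw [Finset.prod_congr rfl fun i _ => this i, Finset.prod_mul_distrib]
      congr 1
      rw [Fintype.prod_eq_single a fun i hia => by
        rw [Finsupp.single_apply, if_neg (Ne.symm hia), pow_zero], Finsupp.single_apply, if_pos rfl]
    rw [hsplit A, hsplit A']
    have hsum : (∑ i, (Finsupp.single a b + f) i) = b + ∑ i, f i := by
      have : ∀ i, (Finsupp.single a b + f) i = (Finsupp.single a b) i + f i := fun i => rfl
      rw [Finset.sum_congr rfl fun i _ => this i, Finset.sum_add_distrib]
      congr 1
      rw [Fintype.sum_eq_single a fun i hia => by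
        rw [Finsupp.single_apply, if_neg (Ne.symm hia)], Finsupp.single_apply, if_pos rfl]
    rw [hsum]
    have key : A a ^ b * ∏ i, A i ^ f i - A' a ^ b * ∏ i, A' i ^ f i
        = A a ^ b * (∏ i, A i ^ f i - ∏ i, A' i ^ f i) + (A a ^ b - A' a ^ b) * ∏ i, A' i ^ f i := by
      ring
    rw [key]
    obtain ⟨c, hc⟩ := hd a
    have h2 : ((A a ^ b - A' a ^ b) * ∏ i, A' i ^ f i).totalDegree < b + ∑ i, f i := by
      calc ((A a ^ b - A' a ^ b) * ∏ i, A' i ^ f i).totalDegree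
          ≤ (A a ^ b - A' a ^ b).totalDegree + (∏ i, A' i ^ f i).totalDegree := totalDegree_mul _ _
        _ ≤ (b - 1) + ∑ i, f i :=
            Nat.add_le_add (td_pow_sub' _ _ (hA a) (hA' a) c hc b) (td_prod_le' A' hA' f)
        _ < b + ∑ i, f i := by omega
    have h1 : (A a ^ b * (∏ i, A i ^ f i - ∏ i, A' i ^ f i)).totalDegree < b + ∑ i, f i := by
      rcases ih with h0 | hlt
      · rw [h0, mul_zero, totalDegree_zero]; omega
      · calc (A a ^ b * (∏ i, A i ^ f i - ∏ i, A' i ^ f i)).totalDegree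
            ≤ (A a ^ b).totalDegree + (∏ i, A i ^ f i - ∏ i, A' i ^ f i).totalDegree :=
              totalDegree_mul _ _
          _ ≤ b * 1 + (∏ i, A i ^ f i - ∏ i, A' i ^ f i).totalDegree :=
              Nat.add_le_add ((totalDegree_pow _ _).trans (Nat.mul_le_mul_left _ (hA a))) le_rfl
          _ < b + ∑ i, f i := by omega
    exact lt_of_le_of_lt (totalDegree_add _ _) (max_lt h1 h2)

private lemma aeval_expand' {l m : ℕ} (A : Fin m → MvPolynomial (Fin l) F)
    (P : MvPolynomial (Fin m) F) :
    aeval A P = ∑ d ∈ P.support, C (P.coeff d) * ∏ i, A i ^ d i := by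
  rw [aeval_def, eval₂_eq']
  rfl

private lemma sum_support_le' {m : ℕ} (P : MvPolynomial (Fin m) F) (d : Fin m →₀ ℕ)
    (hd : d ∈ P.support) : ∑ i, d i ≤ P.totalDegree := by
  have := le_totalDegree hd
  rwa [Finsupp.sum_fintype _ _ (fun _ => rfl)] at this

private lemma td_aeval_le' {l m : ℕ} (A : Fin m → MvPolynomial (Fin l) F)
    (hA : ∀ i, (A i).totalDegree ≤ 1) (P : MvPolynomial (Fin m) F) :
    (aeval A P).totalDegree ≤ P.totalDegree := by
  rw [aeval_expand']
  refine (totalDegree_finset_sum _ _).trans (Finset.sup_le fun d hd => ?_)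
  calc (C (P.coeff d) * ∏ i, A i ^ d i).totalDegree
      ≤ (C (P.coeff d)).totalDegree + (∏ i, A i ^ d i).totalDegree := totalDegree_mul _ _
    _ ≤ 0 + ∑ i, d i := Nat.add_le_add (le_of_eq (totalDegree_C _)) (td_prod_le' A hA d)
    _ ≤ P.totalDegree := by rw [Nat.zero_add]; exact sum_support_le' P d hd

private lemma td_aeval_sub' {l m : ℕ} (A A' : Fin m → MvPolynomial (Fin l) F)
    (hA : ∀ i, (A i).totalDegree ≤ 1) (hA' : ∀ i, (A' i).totalDegree ≤ 1)
    (hd : ∀ i, ∃ c : F, A i - A' i = C c) (P : MvPolynomial (Fin m) F) (D : ℕ)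
    (hP : P.totalDegree ≤ D) (hD : 1 ≤ D) :
    (aeval A P - aeval A' P).totalDegree < D := by
  rw [aeval_expand', aeval_expand', ← Finset.sum_sub_distrib]
  refine lt_of_le_of_lt (totalDegree_finset_sum _ _) ?_
  rw [Finset.sup_lt_iff (show (⊥ : ℕ) < D from hD)]
  intro d hdsupp
  rw [← mul_sub]
  rcases td_delta' A A' hA hA' hd d with h0 | hlt
  · rw [h0, mul_zero, totalDegree_zero]; omega
  · calc (C (P.coeff d) * (∏ i, A i ^ d i - ∏ i, A' i ^ d i)).totalDegree
        ≤ 0 + (∏ i, A i ^ d i - ∏ i, A' i ^ d i).totalDegree :=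
          (totalDegree_mul _ _).trans (Nat.add_le_add (le_of_eq (totalDegree_C _)) le_rfl)
      _ < ∑ i, d i := by omega
      _ ≤ D := (sum_support_le' P d hdsupp).trans hP

private lemma aeval_eq_eval' {σ : Type*} (w : σ → F) (p : MvPolynomial σ F) :
    aeval w p = eval w p := by
  rw [← coe_aeval_eq_eval]; rfl

private lemma eval_aeval' {l m : ℕ} (w : Fin l → F) (A : Fin m → MvPolynomial (Fin l) F)
    (p : MvPolynomial (Fin m) F) :
    eval w (aeval A p) = eval (fun i => eval w (A i)) p := by
  have h := AlgHom.congr_fun (comp_aeval (φ := aeval w) (f := A)) p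
  simp only [AlgHom.comp_apply, aeval_eq_eval'] at h
  exact h

end DegLemmas


section WarningSecond
variable {F : Type*} [Field F] [Fintype F] [DecidableEq F]


private def dotL {m : ℕ} (v : Fin m → F) : (Fin m → F) →ₗ[F] F where
  toFun y := ∑ i, v i * y i
  map_add' y z := by simp [mul_add, Finset.sum_add_distrib]
  map_smul' s y := by
    simp only [Pi.smul_apply, smul_eq_mul, RingHom.id_apply, Finset.mul_sum]
    exact Finset.sum_congr rfl fun i _ => by ring

private lemma dotL_apply {m : ℕ} (v y : Fin m → F) : dotL v y = ∑ i, v i * y i := rfl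

private lemma exists_coord {m : ℕ} {v : Fin m → F} (hv : v ≠ 0) : ∃ i0, v i0 ≠ 0 := by
  by_contra h; push_neg at h; exact hv (funext fun i => h i)

private lemma dotL_single {m : ℕ} (v : Fin m → F) (i0 : Fin m) (h : v i0 ≠ 0) :
    dotL v (Pi.single i0 (v i0)⁻¹) = 1 := by
  rw [dotL_apply, Finset.sum_eq_single i0]
  · rw [Pi.single_eq_same, mul_inv_cancel₀ h]
  · intro i _ hne; rw [Pi.single_eq_of_ne hne, mul_zero]
  · intro hh; exact absurd (mem_univ i0) hh

private lemma dotL_surj {m : ℕ} {v : Fin m → F} (hv : v ≠ 0) : Function.Surjective (dotL v) := by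
  obtain ⟨i0, hi0⟩ := exists_coord hv
  intro t
  refine ⟨t • (Pi.single i0 (v i0)⁻¹ : Fin m → F), ?_⟩
  rw [map_smul, dotL_single v i0 hi0, smul_eq_mul, mul_one]

private lemma dotL_ker_rank {m : ℕ} {v : Fin m → F} (hv : v ≠ 0) :
    Module.finrank F (LinearMap.ker (dotL v)) = m - 1 := by
  have h1 := (dotL v).finrank_range_add_finrank_ker
  rw [LinearMap.range_eq_top.mpr (dotL_surj hv), finrank_top, Module.finrank_self,
    Module.finrank_fintype_fun_eq_card, Fintype.card_fin] at h1
  omega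

private lemma card_dot_ker {m : ℕ} {v : Fin m → F} (hv : v ≠ 0) :
    (univ.filter fun c : Fin m → F => dotL v c = 0).card = Fintype.card F ^ (m - 1) := by
  classical
  have h1 : Fintype.card (LinearMap.ker (dotL v))
      = Fintype.card F ^ Module.finrank F (LinearMap.ker (dotL v)) := Module.card_eq_pow_finrank
  rw [dotL_ker_rank hv] at h1
  rw [← h1, ← Fintype.card_subtype]
  refine Fintype.card_congr ?_ |>.symm
  exact Equiv.subtypeEquivRight fun c => Iff.rfl

set_option maxHeartbeats 1000000 in
private lemma warning2 {m r : ℕ} (g : Fin r → MvPolynomial (Fin m) F) (d : ℕ)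
    (hdeg : ∑ i, (g i).totalDegree ≤ d) (hm : d < m) (a : Fin m → F)
    (ha : ∀ i, eval a (g i) = 0) :
    Fintype.card F ≤ (univ.filter fun y : Fin m → F => ∀ i, eval y (g i) = 0).card := by
  classical
  have hq2 : 2 ≤ Fintype.card F := Fintype.one_lt_card
  have hcardfun : Fintype.card (Fin m → F) = Fintype.card F ^ m := by
    rw [Fintype.card_fun, Fintype.card_fin]
  rcases Nat.eq_zero_or_pos d with hd0 | hd1
  · -- degenerate case: all polynomials are constants vanishing at a
    have hZ : (univ.filter fun y : Fin m → F => ∀ i, eval y (g i) = 0) = univ := by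
      refine Finset.filter_true_of_mem fun y _ => fun i => ?_
      have hti : (g i).totalDegree = 0 := by
        have h1 : (g i).totalDegree ≤ ∑ j, (g j).totalDegree :=
          Finset.single_le_sum (f := fun j => (g j).totalDegree)
            (fun j _ => Nat.zero_le _) (mem_univ i)
        omega
      have hconst : eval y (g i) = eval a (g i) := by
        rw [eval_eq', eval_eq']
        refine Finset.sum_congr rfl fun dd hdd => ?_
        have h0 : ∀ j, dd j = 0 := fun j => ((totalDegree_eq_zero_iff _ (g i)).mp hti) dd hdd j
        simp [h0]
      rw [hconst, ha i]
    rw [hZ, Finset.card_univ, hcardfun]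
    exact Nat.le_self_pow (by omega) _
  -- main case
  have hm2 : 2 ≤ m := by omega
  set q := Fintype.card F with hqdef
  set P : MvPolynomial (Fin m) F := ∏ i, (1 - g i ^ (q - 1)) with hPdef
  have hPdeg : P.totalDegree ≤ (q - 1) * d := by
    refine (totalDegree_finset_prod _ _).trans ?_
    calc ∑ i, (1 - g i ^ (q - 1)).totalDegree ≤ ∑ i, (q - 1) * (g i).totalDegree := by
          refine Finset.sum_le_sum fun i _ => ?_
          refine (totalDegree_sub _ _).trans (max_le (by rw [totalDegree_one]; omega) ?_)
          exact totalDegree_pow _ _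
      _ = (q - 1) * ∑ i, (g i).totalDegree := by rw [Finset.mul_sum]
      _ ≤ (q - 1) * d := Nat.mul_le_mul_left _ hdeg
  have hPeval : ∀ y : Fin m → F,
      eval y P = if (∀ i, eval y (g i) = 0) then 1 else 0 := by
    intro y
    by_cases hy : ∀ i, eval y (g i) = 0
    · rw [if_pos hy, hPdef, eval_prod]
      refine Finset.prod_eq_one fun i _ => ?_
      rw [map_sub, map_one, map_pow, hy i, zero_pow (by omega : q - 1 ≠ 0), sub_zero]
    · rw [if_neg hy, hPdef, eval_prod]
      push_neg at hy
      obtain ⟨i0, hi0⟩ := hy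
      refine Finset.prod_eq_zero (mem_univ i0) ?_
      rw [map_sub, map_one, map_pow, FiniteField.pow_card_sub_one_eq_one _ hi0, sub_self]
  set Z : Finset (Fin m → F) := univ.filter (fun y => ∀ i, eval y (g i) = 0) with hZdef
  -- congruence of parallel hyperplane sections modulo the characteristic
  have hcong : ∀ c : Fin m → F, c ≠ 0 → ∀ t t' : F,
      ((Z.filter fun y => dotL c y = t).card : F)
        = ((Z.filter fun y => dotL c y = t').card : F) := by
    intro c hc t t'
    obtain ⟨i0, hi0⟩ := exists_coord hc
    set y0 : Fin m → F := Pi.single i0 (c i0)⁻¹ with hy0def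
    have hχy0 : dotL c y0 = 1 := dotL_single c i0 hi0
    set Bas : Module.Basis (Fin (m - 1)) F (LinearMap.ker (dotL c)) :=
      Module.finBasisOfFinrankEq F _ (dotL_ker_rank hc) with hBdef
    set ψ : (Fin (m - 1) → F) → (Fin m → F) :=
      fun w => ((Bas.equivFun.symm w : LinearMap.ker (dotL c)) : Fin m → F) with hψdef
    have hψmem : ∀ w, dotL c (ψ w) = 0 := fun w => (Bas.equivFun.symm w).2
    have hψinj : Function.Injective ψ := by
      intro w w' h
      exact Bas.equivFun.symm.injective (Subtype.coe_injective h)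
    have hψlin : ∀ w i, ψ w i = ∑ j, w j * ((Bas j : LinearMap.ker (dotL c)) : Fin m → F) i := by
      intro w i
      rw [hψdef]
      simp only [Module.Basis.equivFun_symm_apply]
      rw [Submodule.coe_sum, Finset.sum_apply]
      refine Finset.sum_congr rfl fun j _ => ?_
      rw [SetLike.val_smul, Pi.smul_apply, smul_eq_mul]
    set A : F → Fin m → MvPolynomial (Fin (m - 1)) F := fun s i =>
      C (s * y0 i) + ∑ j, C (((Bas j : LinearMap.ker (dotL c)) : Fin m → F) i) * X j with hAdef
    have hAdeg : ∀ s i, ((A s i).totalDegree ≤ 1) := by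
      intro s i
      refine (totalDegree_add _ _).trans (max_le (by rw [totalDegree_C]; omega) ?_)
      refine (totalDegree_finset_sum _ _).trans (Finset.sup_le fun j _ => ?_)
      refine (totalDegree_mul _ _).trans ?_
      rw [totalDegree_C, totalDegree_X]
    have hAdiff : ∀ i, ∃ cc : F, A t i - A t' i = C cc :=
      fun i => ⟨t * y0 i - t' * y0 i, by rw [hAdef, map_sub]; ring⟩
    have hAeval : ∀ (s : F) (w : Fin (m - 1) → F), (fun i => eval w (A s i)) = s • y0 + ψ w := by
      intro s w
      funext i
      rw [hAdef]
      simp only [map_add, eval_C, map_sum, eval_mul, eval_X]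
      rw [Pi.add_apply, Pi.smul_apply, smul_eq_mul, hψlin]
      congr 1
      exact Finset.sum_congr rfl fun j _ => mul_comm _ _
    have hcount : ∀ s : F, ((Z.filter fun y => dotL c y = s).card : F)
        = ∑ w : Fin (m - 1) → F, eval (s • y0 + ψ w) P := by
      intro s
      have hbij : (univ.filter fun w : Fin (m - 1) → F => ∀ i, eval (s • y0 + ψ w) (g i) = 0).card
          = (Z.filter fun y => dotL c y = s).card := by
        refine Finset.card_bij (fun w _ => s • y0 + ψ w) ?_ ?_ ?_
        · intro w hw
          rw [Finset.mem_filter] at hw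
          refine Finset.mem_filter.mpr ⟨Finset.mem_filter.mpr ⟨mem_univ _, hw.2⟩, ?_⟩
          rw [map_add, map_smul, hχy0, hψmem w, add_zero, smul_eq_mul, mul_one]
        · intro w hw w' hw' h
          exact hψinj (add_left_cancel h)
        · intro y hy
          rw [Finset.mem_filter] at hy
          have hyZ : ∀ i, eval y (g i) = 0 := (Finset.mem_filter.mp hy.1).2
          have hym : y - s • y0 ∈ LinearMap.ker (dotL c) := by
            rw [LinearMap.mem_ker, map_sub, map_smul, hχy0, smul_eq_mul, mul_one, hy.2, sub_self]
          have hψy : ψ (Bas.equivFun ⟨y - s • y0, hym⟩) = y - s • y0 := by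
            rw [hψdef]
            simp only [LinearEquiv.symm_apply_apply]
          have hpt : s • y0 + ψ (Bas.equivFun ⟨y - s • y0, hym⟩) = y := by
            rw [hψy]; abel
          refine ⟨Bas.equivFun ⟨y - s • y0, hym⟩,
            Finset.mem_filter.mpr ⟨mem_univ _, ?_⟩, hpt⟩
          rw [hpt]
          exact hyZ
      have hsum : ∑ w : Fin (m - 1) → F, eval (s • y0 + ψ w) P
          = ∑ w : Fin (m - 1) → F, if (∀ i, eval (s • y0 + ψ w) (g i) = 0) then (1 : F) else 0 :=
        Finset.sum_congr rfl fun w _ => hPeval _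
      rw [hsum, Finset.sum_boole, ← hbij]
    rw [hcount t, hcount t']
    have hG : (aeval (A t) P - aeval (A t') P).totalDegree
        < (q - 1) * Fintype.card (Fin (m - 1)) := by
      rw [Fintype.card_fin]
      have h1 : 1 ≤ (q - 1) * d := by
        have := Nat.mul_le_mul (show 1 ≤ q - 1 by omega) hd1
        omega
      refine lt_of_lt_of_le
        (td_aeval_sub' (A t) (A t') (hAdeg t) (hAdeg t') hAdiff P ((q - 1) * d) hPdeg h1) ?_
      exact Nat.mul_le_mul_left _ (by omega)
    have hzero := MvPolynomial.sum_eval_eq_zero _ hG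
    have hexp : ∀ w : Fin (m - 1) → F, eval w (aeval (A t) P - aeval (A t') P)
        = eval (t • y0 + ψ w) P - eval (t' • y0 + ψ w) P := by
      intro w
      rw [map_sub, eval_aeval', eval_aeval', hAeval t w, hAeval t' w]
    rw [Finset.sum_congr rfl fun w _ => hexp w, Finset.sum_sub_distrib] at hzero
    exact sub_eq_zero.mp hzero
  -- dichotomy
  by_cases hcase : ∃ c : Fin m → F, c ≠ 0 ∧
      ((Z.filter fun y => dotL c y = dotL c a).card : F) ≠ 0
  · obtain ⟨c, hc, hval⟩ := hcase
    have hpart : Z.card = ∑ t : F, (Z.filter fun y => dotL c y = t).card :=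
      Finset.card_eq_sum_card_fiberwise fun x _ => mem_univ _
    have hpos : ∀ t : F, 1 ≤ (Z.filter fun y => dotL c y = t).card := by
      intro t
      rcases Nat.eq_zero_or_pos (Z.filter fun y => dotL c y = t).card with h0 | h1
      · exfalso
        apply hval
        have := hcong c hc t (dotL c a)
        rw [h0, Nat.cast_zero] at this
        exact this.symm
      · exact h1
    calc q = ∑ _t : F, 1 := by rw [Finset.sum_const, card_univ, smul_eq_mul, mul_one]
      _ ≤ ∑ t : F, (Z.filter fun y => dotL c y = t).card := Finset.sum_le_sum fun t _ => hpos t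
      _ = Z.card := hpart.symm
  · push_neg at hcase
    set p := ringChar F with hpdef
    haveI hCp : CharP F p := ringChar.charP F
    have hp : p.Prime := CharP.char_is_prime F p
    have haZ : a ∈ Z := Finset.mem_filter.mpr ⟨mem_univ _, ha⟩
    have hterm : ∀ c : Fin m → F, c ≠ 0 →
        1 ≤ ((Z.erase a).filter fun b => dotL c b = dotL c a).card := by
      intro c hc
      have hmem : a ∈ Z.filter fun b => dotL c b = dotL c a :=
        Finset.mem_filter.mpr ⟨haZ, rfl⟩
      have hzero : ((Z.filter fun b => dotL c b = dotL c a).card : F) = 0 := hcase c hc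
      have hdvd : p ∣ (Z.filter fun b => dotL c b = dotL c a).card :=
        (CharP.cast_eq_zero_iff F p _).mp hzero
      have hge : p ≤ (Z.filter fun b => dotL c b = dotL c a).card :=
        Nat.le_of_dvd (Finset.card_pos.mpr ⟨a, hmem⟩) hdvd
      rw [Finset.filter_erase, Finset.card_erase_of_mem hmem]
      have := hp.two_le
      omega
    have hswap : ∑ c ∈ univ.erase (0 : Fin m → F),
          ((Z.erase a).filter fun b => dotL c b = dotL c a).card
        = ∑ b ∈ Z.erase a,
          ((univ.erase (0 : Fin m → F)).filter fun c => dotL c b = dotL c a).card := by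
      simp only [Finset.card_filter]
      exact Finset.sum_comm
    have hfib : ∀ b ∈ Z.erase a,
        ((univ.erase (0 : Fin m → F)).filter fun c => dotL c b = dotL c a).card
          = q ^ (m - 1) - 1 := by
      intro b hb
      have hba : b ≠ a := Finset.ne_of_mem_erase hb
      set v : Fin m → F := b - a with hvdef
      have hv : v ≠ 0 := sub_ne_zero.mpr hba
      have hpred : ∀ c : Fin m → F, (dotL c b = dotL c a) ↔ (dotL v c = 0) := by
        intro c
        have hkey : dotL c b - dotL c a = dotL v c := by
          rw [dotL_apply, dotL_apply, dotL_apply, ← Finset.sum_sub_distrib]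
          refine Finset.sum_congr rfl fun i _ => ?_
          rw [hvdef, Pi.sub_apply]
          ring
        rw [← sub_eq_zero, hkey]
      have h0in : (0 : Fin m → F) ∈ univ.filter fun c : Fin m → F => dotL v c = 0 :=
        Finset.mem_filter.mpr ⟨mem_univ _, map_zero _⟩
      calc ((univ.erase (0 : Fin m → F)).filter fun c => dotL c b = dotL c a).card
          = ((univ.erase (0 : Fin m → F)).filter fun c => dotL v c = 0).card := by
            rw [Finset.filter_congr fun c _ => by rw [hpred c]]
        _ = ((univ.filter fun c : Fin m → F => dotL v c = 0).erase 0).card := by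
            rw [Finset.filter_erase]
        _ = (univ.filter fun c : Fin m → F => dotL v c = 0).card - 1 :=
            Finset.card_erase_of_mem h0in
        _ = q ^ (m - 1) - 1 := by rw [card_dot_ker hv]
    have hlow : Fintype.card (Fin m → F) - 1 ≤ (Z.erase a).card * (q ^ (m - 1) - 1) := by
      calc Fintype.card (Fin m → F) - 1 = (univ.erase (0 : Fin m → F)).card := by
            rw [Finset.card_erase_of_mem (mem_univ _), Finset.card_univ]
        _ = ∑ _c ∈ univ.erase (0 : Fin m → F), 1 := by rw [Finset.sum_const, smul_eq_mul, mul_one]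
        _ ≤ ∑ c ∈ univ.erase (0 : Fin m → F),
              ((Z.erase a).filter fun b => dotL c b = dotL c a).card :=
            Finset.sum_le_sum fun c hc => hterm c (Finset.ne_of_mem_erase hc)
        _ = ∑ b ∈ Z.erase a,
              ((univ.erase (0 : Fin m → F)).filter fun c => dotL c b = dotL c a).card := hswap
        _ = ∑ _b ∈ Z.erase a, (q ^ (m - 1) - 1) := Finset.sum_congr rfl hfib
        _ = (Z.erase a).card * (q ^ (m - 1) - 1) := by rw [Finset.sum_const, smul_eq_mul]
    by_contra hcon
    push_neg at hcon
    have hcard1 : 1 ≤ Z.card := Finset.card_pos.mpr ⟨a, haZ⟩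
    have hZa : (Z.erase a).card = Z.card - 1 := Finset.card_erase_of_mem haZ
    rw [hcardfun] at hlow
    have hQ : q ≤ q ^ (m - 1) := by
      calc q = q ^ 1 := (pow_one q).symm
        _ ≤ q ^ (m - 1) := Nat.pow_le_pow_right (by omega) (by omega)
    have hqm : q ^ m = q ^ (m - 1) * q := by
      rw [← pow_succ]
      congr 1
      omega
    set n1 := (Z.erase a).card with hn1def
    have hn1 : n1 + 2 ≤ q := by omega
    set Q := q ^ (m - 1) with hQdef
    have h2Q : 2 ≤ Q := le_trans hq2 hQ
    -- pass to integers
    have hlowZ : (Q : ℤ) * (q : ℤ) - 1 ≤ (n1 : ℤ) * ((Q : ℤ) - 1) := by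
      rw [hqm] at hlow
      have h := (Nat.cast_le (α := ℤ)).mpr hlow
      rwa [Nat.cast_sub (show 1 ≤ Q * q from Nat.mul_pos (by omega) (by omega)),
        Nat.cast_mul, Nat.cast_mul, Nat.cast_sub (by omega : 1 ≤ Q), Nat.cast_one] at h
    have hkey : (n1 : ℤ) * ((Q : ℤ) - 1) ≤ ((q : ℤ) - 2) * ((Q : ℤ) - 1) := by
      apply mul_le_mul_of_nonneg_right
      · have : (n1 : ℤ) + 2 ≤ q := by exact_mod_cast hn1
        linarith
      · have : (2 : ℤ) ≤ Q := by exact_mod_cast h2Q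
        linarith
    have hqZ : (2 : ℤ) ≤ q := by exact_mod_cast hq2
    have hQZ2 : (2 : ℤ) ≤ Q := by exact_mod_cast h2Q
    have hQq : (q : ℤ) ≤ Q := by exact_mod_cast hQ
    have hexpand : ((q : ℤ) - 2) * ((Q : ℤ) - 1) = (q : ℤ) * Q - q - 2 * Q + 2 := by ring
    linarith [hlowZ, hkey, hexpand]


end WarningSecond

theorem stmt_4 (q n r : ℕ) (F : Type*) [Field F] [Fintype F]
    (hq : Fintype.card F = q)
    (f : Fin r → MvPolynomial (Fin n) F)
    (d : ℕ) (hd : d = ∑ i, (f i).totalDegree)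
    (Z : Set (Fin n → F))
    (hZ : Z = {x | ∀ i, MvPolynomial.eval x (f i) = 0})
    (W : Submodule F (Fin n → F)) (v0 : Fin n → F)
    (L : Set (Fin n → F))
    (hL : L = (fun x => v0 + x) '' (W : Set (Fin n → F)))
    (h1 : 2 ≤ (Z ∩ L).ncard) (h2 : (Z ∩ L).ncard ≤ q - 1) :
    Module.finrank F W ≤ d := by
  classical
  by_contra hcon
  push_neg at hcon
  set m := Module.finrank F W with hmdef
  let bW : Module.Basis (Fin m) F W := Module.finBasis F W
  set ι : (Fin m → F) → (Fin n → F) := fun y => ((bW.equivFun.symm y : W) : Fin n → F) with hιdef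
  have hιmem : ∀ y, ι y ∈ W := fun y => (bW.equivFun.symm y).2
  have hιinj : Function.Injective ι := fun y y' h =>
    bW.equivFun.symm.injective (Subtype.coe_injective h)
  have hιlin : ∀ y i0, ι y i0 = ∑ j, y j * ((bW j : W) : Fin n → F) i0 := by
    intro y i0
    rw [hιdef]
    simp only [Module.Basis.equivFun_symm_apply]
    rw [Submodule.coe_sum, Finset.sum_apply]
    exact Finset.sum_congr rfl fun j _ => by rw [SetLike.val_smul, Pi.smul_apply, smul_eq_mul]
  have hιsurj : ∀ w ∈ W, ∃ y, ι y = w := fun w hw =>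
    ⟨bW.equivFun ⟨w, hw⟩, by rw [hιdef]; simp only [LinearEquiv.symm_apply_apply]⟩
  set A : Fin n → MvPolynomial (Fin m) F := fun i0 =>
    C (v0 i0) + ∑ j, C (((bW j : W) : Fin n → F) i0) * X j with hAdef
  set g : Fin r → MvPolynomial (Fin m) F := fun i => aeval A (f i) with hgdef
  have hAdeg : ∀ i0, (A i0).totalDegree ≤ 1 := by
    intro i0
    refine (totalDegree_add _ _).trans (max_le (by rw [totalDegree_C]; omega) ?_)
    refine (totalDegree_finset_sum _ _).trans (Finset.sup_le fun j _ => ?_)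
    refine (totalDegree_mul _ _).trans ?_
    rw [totalDegree_C, totalDegree_X]
  have hgdeg : ∀ i, (g i).totalDegree ≤ (f i).totalDegree := fun i =>
    td_aeval_le' A hAdeg (f i)
  have hAeval : ∀ y : Fin m → F, (fun i0 => eval y (A i0)) = v0 + ι y := by
    intro y
    funext i0
    rw [hAdef]
    simp only [map_add, eval_C, map_sum, eval_mul, eval_X]
    rw [Pi.add_apply, hιlin]
    congr 1
    exact Finset.sum_congr rfl fun j _ => mul_comm _ _
  have hgeval : ∀ (y : Fin m → F) i, eval y (g i) = eval (v0 + ι y) (f i) := by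
    intro y i
    rw [hgdef, eval_aeval', hAeval y]
  have hset : Z ∩ L = (fun y => v0 + ι y) '' {y : Fin m → F | ∀ i, eval y (g i) = 0} := by
    ext x
    constructor
    · rintro ⟨hxZ, hxL⟩
      rw [hL] at hxL
      obtain ⟨w, hw, rfl⟩ := hxL
      obtain ⟨y, rfl⟩ := hιsurj w hw
      refine ⟨y, fun i => ?_, rfl⟩
      rw [hgeval]
      rw [hZ] at hxZ
      exact hxZ i
    · rintro ⟨y, hy, rfl⟩
      constructor
      · rw [hZ]
        intro i
        rw [← hgeval]
        exact hy i
      · rw [hL]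
        exact ⟨ι y, hιmem y, rfl⟩
  set S : Finset (Fin m → F) := univ.filter (fun y => ∀ i, eval y (g i) = 0) with hSdef
  have hStoSet : (S : Set (Fin m → F)) = {y : Fin m → F | ∀ i, eval y (g i) = 0} := by
    ext y
    simp [hSdef]
  have hNcard : (Z ∩ L).ncard = S.card := by
    rw [hset, ← hStoSet,
      Set.ncard_image_of_injective _ (fun y y' (h : v0 + ι y = v0 + ι y') =>
        hιinj (add_left_cancel h)),
      Set.ncard_coe_finset]
  have hScard2 : 2 ≤ S.card := hNcard ▸ h1
  obtain ⟨a, haS⟩ := Finset.card_pos.mp (show 0 < S.card by omega)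
  have ha : ∀ i, eval a (g i) = 0 := by
    have h := haS
    rw [hSdef] at h
    exact (Finset.mem_filter.mp h).2
  have hwar := warning2 g d (by rw [hd]; exact Finset.sum_le_sum fun i _ => hgdeg i) hcon a ha
  rw [← hSdef] at hwar
  have hq1 : 1 ≤ q := by rw [← hq]; exact Fintype.card_pos
  rw [hq] at hwar
  have := hNcard ▸ h2
  omega
end

section
/- For integers v ≥ 2 and q ≥ 2v+1 with (v,q) not equal to (2,5) or (2,7), we have ⌊qv/(v+1)⌋^v > q^v/(v+1). -/
open Real

-- monotonicity in q of the key inequality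
lemma mono_key (v q0 q : ℕ) (hq0 : 2 ≤ q0) (hq : q0 ≤ q)
    (hbase : ((v+1)*q0)^v < (v+1)*(v*(q0-1))^v) :
    ((v+1)*q)^v < (v+1)*(v*(q-1))^v := by
  have ha : 0 < (q0-1)^v := Nat.pow_pos (by omega)
  have hstep : q*(q0-1) ≤ q0*(q-1) := by
    zify [show 1 ≤ q0 by omega, show 1 ≤ q by omega]
    nlinarith
  have h1 : ((v+1)*q)^v * (q0-1)^v ≤ ((v+1)*q0)^v * (q-1)^v := by
    rw [← mul_pow, ← mul_pow]
    apply Nat.pow_le_pow_left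
    calc (v+1)*q*(q0-1) = (v+1)*(q*(q0-1)) := by ring
      _ ≤ (v+1)*(q0*(q-1)) := Nat.mul_le_mul_left _ hstep
      _ = (v+1)*q0*(q-1) := by ring
  have h2 : ((v+1)*q0)^v * (q-1)^v < ((v+1)*(v*(q0-1))^v) * (q-1)^v := by
    apply Nat.mul_lt_mul_of_lt_of_le hbase le_rfl
    exact Nat.pow_pos (by omega)
  have h3 : ((v+1)*(v*(q0-1))^v) * (q-1)^v = ((v+1)*(v*(q-1))^v) * (q0-1)^v := by
    rw [mul_assoc, mul_assoc, ← mul_pow, ← mul_pow]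
    ring
  have := lt_of_le_of_lt h1 (h3 ▸ h2)
  exact Nat.lt_of_mul_lt_mul_right this

-- base case at q = 2v+1, for v ≥ 3
lemma base_key (v : ℕ) (hv : 3 ≤ v) :
    ((v+1)*(2*v+1))^v < (v+1)*(v*(2*v+1-1))^v := by
  rcases lt_or_ge v 7 with h7 | h7
  · interval_cases v <;> norm_num
  · -- real-analytic proof for v ≥ 7
    have hvR : (7:ℝ) ≤ (v:ℝ) := by exact_mod_cast h7
    set V : ℝ := (v:ℝ) with hV
    have hVpos : (0:ℝ) < V := by nlinarith
    have key : ((V+1)*(2*V+1))^v < (V+1)*(V*(2*V))^v := by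
      set x : ℝ := (3*V+1)/(2*V^2) with hx
      have hxpos : 0 ≤ x := by positivity
      have heq : (V+1)*(2*V+1) = 2*V^2*(1+x) := by
        rw [hx]; field_simp
        ring
      have h1 : ((V+1)*(2*V+1))^v = (2*V^2)^v * (1+x)^v := by
        rw [heq, mul_pow]
      have h2 : (1+x)^v ≤ Real.exp x ^ v := by
        apply pow_le_pow_left₀ (by linarith)
        linarith [Real.add_one_le_exp x]
      have h3 : Real.exp x ^ v = Real.exp (v * x) := by
        rw [← Real.exp_nat_mul]
      have h4 : (v:ℝ) * x ≤ 2 := by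
        rw [hx, ← hV, ← mul_div_assoc, div_le_iff₀ (by positivity)]
        nlinarith
      have h5 : Real.exp ((v:ℝ)*x) ≤ Real.exp 2 := Real.exp_le_exp.mpr h4
      have h6 : Real.exp 2 < 8 := by
        have he := Real.exp_one_lt_d9
        have : Real.exp 2 = Real.exp 1 * Real.exp 1 := by
          rw [← Real.exp_add]; norm_num
        rw [this]
        nlinarith [Real.exp_pos 1]
      have h8 : (8:ℝ) ≤ V + 1 := by linarith
      calc ((V+1)*(2*V+1))^v = (2*V^2)^v * (1+x)^v := h1
        _ ≤ (2*V^2)^v * Real.exp 2 := by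
            apply mul_le_mul_of_nonneg_left _ (by positivity)
            calc (1+x)^v ≤ Real.exp x ^ v := h2
              _ = Real.exp ((v:ℝ)*x) := h3
              _ ≤ Real.exp 2 := h5
        _ < (2*V^2)^v * (V+1) := by
            apply mul_lt_mul_of_pos_left (lt_of_lt_of_le h6 h8) (by positivity)
        _ = (V+1)*(V*(2*V))^v := by ring
    have hcast : (((v+1)*(2*v+1))^v : ℝ) < (((v+1)*(v*(2*v+1-1))^v : ℕ) : ℝ) := by
      push_cast [show 2*v+1-1 = 2*v from rfl]
      calc ((V+1)*(2*V+1))^v < (V+1)*(V*(2*V))^v := key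
        _ = (V+1)*(V*(2*V))^v := rfl
    exact_mod_cast hcast

-- from the key inequality to the nat statement about the floor
lemma core (v q : ℕ) (hv : 2 ≤ v) (hq : 2*v+1 ≤ q)
    (hkey : ((v+1)*q)^v < (v+1)*(v*(q-1))^v) :
    q^v < (v+1) * (q*v/(v+1))^v := by
  set m := q*v/(v+1) with hm
  obtain ⟨q', rfl⟩ : ∃ q', q = q'+1 := ⟨q-1, by omega⟩
  have hdiv := Nat.div_add_mod ((q'+1)*v) (v+1)
  have hmod := Nat.mod_lt ((q'+1)*v) (show 0 < v+1 by omega)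
  have h1 : v*(q'+1-1) ≤ (v+1)*m := by
    simp only [Nat.add_sub_cancel]
    rw [hm]
    nlinarith [hdiv, hmod]
  have h2 : (v*(q'+1-1))^v ≤ ((v+1)*m)^v := Nat.pow_le_pow_left h1 v
  have h3 : ((v+1)*(q'+1))^v < (v+1)*((v+1)*m)^v :=
    lt_of_lt_of_le hkey (Nat.mul_le_mul_left _ h2)
  have h4 : (v+1)^v * (q'+1)^v < (v+1)^v * ((v+1)*m^v) := by
    calc (v+1)^v * (q'+1)^v = ((v+1)*(q'+1))^v := (mul_pow _ _ _).symm
      _ < (v+1)*((v+1)*m)^v := h3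
      _ = (v+1)^v * ((v+1)*m^v) := by rw [mul_pow]; ring
  exact Nat.lt_of_mul_lt_mul_left h4

theorem stmt_6 (v q : ℕ) (hv : 2 ≤ v) (hq : 2 * v + 1 ≤ q)
    (h1 : ¬(v = 2 ∧ q = 5)) (h2 : ¬(v = 2 ∧ q = 7)) :
    ((q * v / (v + 1) : ℕ) : ℝ) ^ v > (q : ℝ) ^ v / (v + 1) := by
  have hnat : q^v < (v+1) * (q*v/(v+1))^v := by
    rcases eq_or_lt_of_le hv with hv2 | hv3
    · -- v = 2
      subst hv2
      rcases eq_or_lt_of_le hq with h5 | h5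
      · omega
      rcases (show q = 6 ∨ q = 7 ∨ 8 ≤ q by omega) with rfl | rfl | h8
      · norm_num
      · exact absurd ⟨rfl, rfl⟩ h2
      · exact core 2 q (by norm_num) hq (mono_key 2 8 q (by norm_num) h8 (by norm_num))
    · -- v ≥ 3
      exact core v q hv hq (mono_key v (2*v+1) q (by omega) hq (base_key v hv3))
  rw [gt_iff_lt, div_lt_iff₀ (by positivity)]
  rw [Nat.mul_comm] at hnat
  exact_mod_cast hnat
end

section
/- Let f be a system of polynomials over F_q in n variables of total degree d with n > d. If the zero set Z(f, F_q^n) is nonempty and is not an affine subspace of F_q^n, then Z(f, F_q^n) contains at least n+2-d points in general position. -/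
open MvPolynomial
open scoped Classical

section Reduction
variable {F : Type*} [Field F] [Fintype F]

/-- exponent reduction modulo `x^q = x` -/
def redExp (q k : ℕ) : ℕ := if k = 0 then 0 else (k - 1) % (q - 1) + 1

lemma redExp_zero (q : ℕ) : redExp q 0 = 0 := rfl

lemma redExp_le (q k : ℕ) : redExp q k ≤ k := by
  unfold redExp; split
  · omega
  · have := Nat.mod_le (k - 1) (q - 1); omega

lemma redExp_le_q (q k : ℕ) (hq : 2 ≤ q) : redExp q k ≤ q - 1 := by
  unfold redExp; split
  · omega
  · have : (k - 1) % (q - 1) < q - 1 := Nat.mod_lt _ (by omega)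
    omega

lemma pow_redExp {q : ℕ} (hq : Fintype.card F = q) (a : F) (k : ℕ) :
    a ^ redExp q k = a ^ k := by
  have hq2 : 2 ≤ q := hq ▸ Fintype.one_lt_card
  unfold redExp
  split
  · rename_i h; rw [h]
  · rename_i hk
    rcases eq_or_ne a 0 with rfl | ha
    · rw [zero_pow (by omega), zero_pow (by omega)]
    · have hcard : a ^ (q - 1) = 1 := by
        rw [← hq]; exact FiniteField.pow_card_sub_one_eq_one a ha
      have hk2 : a ^ k = a ^ ((q - 1) * ((k - 1) / (q - 1))) * a ^ ((k - 1) % (q - 1) + 1) := by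
        rw [← pow_add]; congr 1
        have := Nat.div_add_mod (k - 1) (q - 1); omega
      rw [hk2, pow_mul, hcard, one_pow, one_mul]

/-- reduce all exponents of a polynomial -/
noncomputable def reduceP (q : ℕ) {n : ℕ} (P : MvPolynomial (Fin n) F) : MvPolynomial (Fin n) F :=
  ∑ α ∈ P.support, monomial (Finsupp.mapRange (redExp q) (redExp_zero q) α) (coeff α P)

lemma eval_reduceP {q : ℕ} (hq : Fintype.card F = q) {n : ℕ} (P : MvPolynomial (Fin n) F)
    (x : Fin n → F) : eval x (reduceP q P) = eval x P := by
  rw [reduceP, map_sum, eval_eq' x P]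
  refine Finset.sum_congr rfl fun α hα => ?_
  rw [eval_monomial]
  congr 1
  rw [Finsupp.prod_pow]
  exact Finset.prod_congr rfl fun i _ => by rw [Finsupp.mapRange_apply, pow_redExp hq]

lemma degreeOf_reduceP (q : ℕ) (hq2 : 2 ≤ q) {n : ℕ} (P : MvPolynomial (Fin n) F) (i : Fin n) :
    degreeOf i (reduceP q P) ≤ q - 1 := by
  classical
  rw [degreeOf_le_iff]
  intro m hm
  obtain ⟨α, hα, hm2⟩ := Finset.mem_biUnion.mp (support_sum hm)
  have := support_monomial_subset hm2
  rw [Finset.mem_singleton] at this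
  subst this
  rw [Finsupp.mapRange_apply]
  exact redExp_le_q q _ hq2

lemma totalDegree_reduceP (q : ℕ) {n : ℕ} (P : MvPolynomial (Fin n) F) :
    (reduceP q P).totalDegree ≤ P.totalDegree := by
  refine (totalDegree_finset_sum _ _).trans (Finset.sup_le fun α hα => ?_)
  refine (totalDegree_monomial_le _ _).trans ?_
  have h1 : ((Finsupp.mapRange (redExp q) (redExp_zero q) α).sum fun _ => id)
      = α.sum fun _ b => redExp q b :=
    Finsupp.sum_mapRange_index fun _ => rfl
  rw [h1]
  refine le_trans ?_ (le_totalDegree hα)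
  exact Finsupp.sum_le_sum fun i _ => redExp_le q _

lemma exists_eval_ne_zero : ∀ {n : ℕ} (P : MvPolynomial (Fin n) F), P ≠ 0 →
    (∀ i, degreeOf i P ≤ Fintype.card F - 1) → ∃ x, eval x P ≠ 0 := by
  intro n
  induction n with
  | zero =>
    intro P hP _
    refine ⟨fun i => 0, ?_⟩
    rw [eq_C_of_isEmpty P, eval_C]
    intro h
    exact hP (by rw [eq_C_of_isEmpty P, h, map_zero])
  | succ n ih =>
    intro P hP hred
    set Q := finSuccEquiv F n P with hQdef
    have hQ0 : Q ≠ 0 := fun h => hP ((finSuccEquiv F n).injective (by rw [← hQdef, h, map_zero]))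
    set t := Q.natDegree with ht
    set c := Q.leadingCoeff with hc
    have hc0 : c ≠ 0 := Polynomial.leadingCoeff_ne_zero.mpr hQ0
    have hcred : ∀ i : Fin n, c.degreeOf i ≤ Fintype.card F - 1 := fun i =>
      (degreeOf_coeff_finSuccEquiv P i t).trans (hred i.succ)
    obtain ⟨a, ha⟩ := ih c hc0 hcred
    set qa := Q.map (eval a) with hqa
    have hqa0 : qa ≠ 0 := fun h => ha (by
      have : qa.coeff t = 0 := by rw [h, Polynomial.coeff_zero]
      rwa [hqa, Polynomial.coeff_map] at this)
    have hdeg : qa.natDegree < Fintype.card F := by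
      have h1 : qa.natDegree ≤ t := Polynomial.natDegree_map_le
      have h2 : t ≤ Fintype.card F - 1 := by
        rw [ht, natDegree_finSuccEquiv]; exact hred 0
      have : 2 ≤ Fintype.card F := Fintype.one_lt_card
      omega
    obtain ⟨y, hy⟩ := qa.exists_eval_ne_zero_of_natDegree_lt_card hqa0
      (by rw [Cardinal.mk_fintype]; exact_mod_cast hdeg)
    refine ⟨Fin.cons y a, ?_⟩
    rwa [eval_eq_eval_mv_eval']

end Reduction
section AF
variable {F : Type*} [Field F] [Fintype F]

lemma card_nonzero_step {n : ℕ} (P : MvPolynomial (Fin (n + 1)) F) :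
    (Finset.univ.filter fun a : Fin n → F =>
        eval a ((finSuccEquiv F n P).leadingCoeff) ≠ 0).card *
      (Fintype.card F - (finSuccEquiv F n P).natDegree)
    ≤ (Finset.univ.filter fun x : Fin (n + 1) → F => eval x P ≠ 0).card := by
  set Q := finSuccEquiv F n P with hQdef
  set t := Q.natDegree with ht
  set c := Q.leadingCoeff with hc
  set q := Fintype.card F with hq
  have key : ∀ a : Fin n → F, eval a c ≠ 0 →
      q - t ≤ ((Finset.univ.filter fun x : Fin (n + 1) → F => eval x P ≠ 0).filter
        (fun x => Fin.tail x = a)).card := by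
    intro a ha
    set qa := Q.map (eval a) with hqa
    have hqat : qa.coeff t ≠ 0 := by rw [hqa, Polynomial.coeff_map]; exact ha
    have hqa0 : qa ≠ 0 := fun h => hqat (by rw [h, Polynomial.coeff_zero])
    have hroots : (Finset.univ.filter fun y : F => Polynomial.eval y qa = 0).card ≤ t := by
      have hsub : (Finset.univ.filter fun y : F => Polynomial.eval y qa = 0)
          ⊆ qa.roots.toFinset := by
        intro y hy
        rw [Multiset.mem_toFinset, Polynomial.mem_roots hqa0]
        exact (Finset.mem_filter.mp hy).2
      exact le_trans (Finset.card_le_card hsub) (le_trans qa.roots.toFinset_card_le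
        (le_trans (Polynomial.card_roots' qa) Polynomial.natDegree_map_le))
    have hcompl : q - t ≤ (Finset.univ.filter fun y : F => Polynomial.eval y qa ≠ 0).card := by
      have := Finset.card_filter_add_card_filter_not
        (s := (Finset.univ : Finset F)) (p := fun y => Polynomial.eval y qa = 0)
      rw [Finset.card_univ, ← hq] at this
      simp only [ne_eq]
      omega
    refine le_trans hcompl (Finset.card_le_card_of_injOn (fun y => Fin.cons y a) ?_ ?_)
    · intro y hy
      rw [Finset.mem_coe, Finset.mem_filter] at hy; rw [Finset.mem_coe]
      refine Finset.mem_filter.mpr ⟨Finset.mem_filter.mpr ⟨Finset.mem_univ _, ?_⟩, ?_⟩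
      · show eval (Fin.cons y a) P ≠ 0
        rw [eval_eq_eval_mv_eval']
        exact hy.2
      · simp
    · intro y _ y' _ h
      have := congrFun h 0
      simpa using this
  have base : (Finset.univ.filter fun x : Fin (n + 1) → F => eval x P ≠ 0).card
      = ∑ a : Fin n → F, ((Finset.univ.filter fun x : Fin (n + 1) → F => eval x P ≠ 0).filter
          (fun x => Fin.tail x = a)).card :=
    Finset.card_eq_sum_card_fiberwise (fun x _ => Finset.mem_univ _)
  rw [base]
  calc (Finset.univ.filter fun a : Fin n → F => eval a c ≠ 0).card * (q - t)
      = ∑ _a ∈ Finset.univ.filter fun a : Fin n → F => eval a c ≠ 0, (q - t) := by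
        rw [Finset.sum_const, smul_eq_mul]
    _ ≤ ∑ a ∈ Finset.univ.filter fun a : Fin n → F => eval a c ≠ 0,
          ((Finset.univ.filter fun x : Fin (n + 1) → F => eval x P ≠ 0).filter
            (fun x => Fin.tail x = a)).card := by
        refine Finset.sum_le_sum fun a haa => key a ?_
        exact (Finset.mem_filter.mp haa).2
    _ ≤ ∑ a : Fin n → F, ((Finset.univ.filter fun x : Fin (n + 1) → F => eval x P ≠ 0).filter
          (fun x => Fin.tail x = a)).card :=
        Finset.sum_le_sum_of_subset (Finset.subset_univ _)
lemma AF : ∀ (n : ℕ) (P : MvPolynomial (Fin n) F), P ≠ 0 →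
    (∀ i, P.degreeOf i ≤ Fintype.card F - 1) →
    ∀ s r : ℕ, r + 1 < Fintype.card F →
    P.totalDegree ≤ s * (Fintype.card F - 1) + r → s < n →
    (Fintype.card F - r) * Fintype.card F ^ (n - 1 - s)
      ≤ (Finset.univ.filter fun x : Fin n → F => eval x P ≠ 0).card := by
  intro n
  induction n with
  | zero => intro P _ _ s r _ _ hs; omega
  | succ n ih =>
    intro P hP hred s r hr hdeg hs
    set q := Fintype.card F with hq
    have hq2 : 2 ≤ q := Fintype.one_lt_card
    set Q := finSuccEquiv F n P with hQdef
    have hQ0 : Q ≠ 0 := fun h => hP ((finSuccEquiv F n).injective (by rw [← hQdef, h, map_zero]))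
    set t := Q.natDegree with ht
    set c := Q.leadingCoeff with hc
    have hc0 : c ≠ 0 := Polynomial.leadingCoeff_ne_zero.mpr hQ0
    have htq : t ≤ q - 1 := by rw [ht, hQdef, natDegree_finSuccEquiv]; exact hred 0
    have htD : t ≤ P.totalDegree := by
      rw [ht, hQdef, natDegree_finSuccEquiv]; exact degreeOf_le_totalDegree P 0
    have hcdeg : c.totalDegree + t ≤ P.totalDegree := by
      refine totalDegree_coeff_finSuccEquiv_add_le P t ?_
      rw [← hQdef]
      exact Polynomial.leadingCoeff_ne_zero.mpr hQ0
    have hcred : ∀ i : Fin n, c.degreeOf i ≤ q - 1 := fun i =>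
      le_trans (by rw [hc, Polynomial.leadingCoeff, ← ht, hQdef]
                   exact degreeOf_coeff_finSuccEquiv P i t) (hred i.succ)
    have hcount := card_nonzero_step P
    rw [← hQdef, ← ht, ← hc, ← hq] at hcount
    set NZc := (Finset.univ.filter fun a : Fin n → F => eval a c ≠ 0).card with hNZc
    set NZP := (Finset.univ.filter fun x : Fin (n + 1) → F => eval x P ≠ 0).card with hNZP
    have hexp : n + 1 - 1 - s = n - s := by omega
    rw [hexp]
    rcases le_or_gt t r with htr | hrt
    · -- t ≤ r
      rcases Nat.lt_or_ge s n with hsn | hsn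
      · -- s < n
        have h1 : c.totalDegree ≤ s * (q - 1) + (r - t) := by omega
        have h2 := ih c hc0 hcred s (r - t) (by omega) h1 hsn
        have hkey : (q - r) * q ≤ (q - t) * (q - (r - t)) := by
          have he : q - (r - t) = q - r + t := by omega
          rw [he]
          nlinarith [Nat.sub_add_cancel (show r ≤ q by omega),
            Nat.sub_add_cancel (show t ≤ q by omega)]
        calc (q - r) * q ^ (n - s)
            = ((q - r) * q) * q ^ (n - 1 - s) := by
              have hns : n - s = (n - 1 - s) + 1 := by omega
              rw [hns, pow_succ]; ring
          _ ≤ ((q - t) * (q - (r - t))) * q ^ (n - 1 - s) := Nat.mul_le_mul_right _ hkey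
          _ = ((q - (r - t)) * q ^ (n - 1 - s)) * (q - t) := by ring
          _ ≤ NZc * (q - t) := Nat.mul_le_mul_right _ h2
          _ ≤ NZP := hcount
      · -- s = n
        have hsn' : s = n := by omega
        have hNZc1 : 1 ≤ NZc := by
          obtain ⟨x, hx⟩ := exists_eval_ne_zero c hc0 (by rw [← hq]; exact hcred)
          refine Finset.card_pos.mpr ⟨x, Finset.mem_filter.mpr ⟨Finset.mem_univ _, hx⟩⟩
        have h3 : q - t ≤ NZP := by
          calc q - t = 1 * (q - t) := (one_mul _).symm
            _ ≤ NZc * (q - t) := Nat.mul_le_mul_right _ hNZc1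
            _ ≤ NZP := hcount
        have : n - s = 0 := by omega
        rw [this, pow_zero, mul_one]
        omega
    · -- r < t
      have hs1 : 1 ≤ s := by
        rcases Nat.eq_zero_or_pos s with rfl | h
        · rw [zero_mul, zero_add] at hdeg; omega
        · exact h
      set r2 := q - 1 + r - t with hr2
      have hmul : s * (q - 1) = (s - 1) * (q - 1) + (q - 1) := by
        have h1 := Nat.sub_mul s 1 (q - 1)
        have h2 : 1 * (q - 1) = q - 1 := one_mul _
        have h3 : q - 1 ≤ s * (q - 1) := Nat.le_mul_of_pos_left _ hs1
        omega
      have hdc : c.totalDegree ≤ (s - 1) * (q - 1) + r2 := by omega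
      have h2 := ih c hc0 hcred (s - 1) r2 (by omega) hdc (by omega)
      have hqr2 : q - r2 = t - r + 1 := by omega
      have hexp2 : n - 1 - (s - 1) = n - s := by omega
      rw [hqr2, hexp2] at h2
      have hkey : q - r ≤ (q - t) * (t - r + 1) := by
        have h4 : 1 ≤ q - t := by omega
        calc q - r = (q - t) + (t - r) := by omega
          _ ≤ (q - t) + (q - t) * (t - r) :=
            Nat.add_le_add_left (Nat.le_mul_of_pos_left (t - r) (by omega)) _
          _ = (q - t) * (t - r + 1) := by ring
      calc (q - r) * q ^ (n - s)
          ≤ ((q - t) * (t - r + 1)) * q ^ (n - s) := Nat.mul_le_mul_right _ hkey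
        _ = ((t - r + 1) * q ^ (n - s)) * (q - t) := by ring
        _ ≤ NZc * (q - t) := Nat.mul_le_mul_right _ h2
        _ ≤ NZP := hcount
lemma warning_bound {n r : ℕ} (f : Fin r → MvPolynomial (Fin n) F)
    (d : ℕ) (hd : d = ∑ i, (f i).totalDegree) (hdn : d < n)
    (hne : ∃ x : Fin n → F, ∀ i, eval x (f i) = 0) :
    Fintype.card F ^ (n - d)
      ≤ (Finset.univ.filter fun x : Fin n → F => ∀ i, eval x (f i) = 0).card := by
  set q := Fintype.card F with hq
  have hq2 : 2 ≤ q := Fintype.one_lt_card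
  set P : MvPolynomial (Fin n) F := ∏ i, (1 - f i ^ (q - 1)) with hPdef
  have hev : ∀ x : Fin n → F, (eval x P ≠ 0 ↔ ∀ i, eval x (f i) = 0) := by
    intro x
    rw [hPdef, map_prod]
    constructor
    · intro h i
      by_contra hfi
      apply h
      refine Finset.prod_eq_zero (Finset.mem_univ i) ?_
      rw [map_sub, map_one, map_pow, hq, FiniteField.pow_card_sub_one_eq_one _ hfi, sub_self]
    · intro h
      rw [Finset.prod_eq_one fun i _ => ?_]
      · exact one_ne_zero
      · rw [map_sub, map_one, map_pow, h i, zero_pow (by omega), sub_zero]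
  set P' := reduceP q P with hP'def
  have hP'fun : ∀ x, eval x P' = eval x P := fun x => eval_reduceP hq.symm P x
  obtain ⟨x₀, hx₀⟩ := hne
  have hP'0 : P' ≠ 0 := by
    intro h
    have h2 := hP'fun x₀
    rw [h, map_zero] at h2
    exact (hev x₀).mpr hx₀ h2.symm
  have hdeg : P'.totalDegree ≤ d * (q - 1) + 0 := by
    refine le_trans (totalDegree_reduceP q P) ?_
    rw [add_zero, hPdef, hd, Finset.sum_mul]
    refine le_trans (totalDegree_finset_prod _ _) (Finset.sum_le_sum fun i _ => ?_)
    refine le_trans (totalDegree_sub _ _) ?_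
    rw [totalDegree_one, max_eq_right (Nat.zero_le _)]
    exact le_trans (totalDegree_pow _ _) (le_of_eq (mul_comm _ _))
  have hAF := AF n P' hP'0 (fun i => by rw [← hq]; exact degreeOf_reduceP q hq2 P i)
    d 0 (by omega) hdeg hdn
  have hfe : (Finset.univ.filter fun x : Fin n → F => eval x P' ≠ 0)
      = (Finset.univ.filter fun x : Fin n → F => ∀ i, eval x (f i) = 0) := by
    refine Finset.filter_congr fun x _ => ?_
    rw [hP'fun]
    exact propext (hev x) ▸ Iff.rfl
  rw [hfe] at hAF
  refine le_trans (le_of_eq ?_) hAF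
  rw [Nat.sub_zero, show n - d = (n - 1 - d) + 1 by omega, pow_succ]
  ring
lemma coset_ncard {n : ℕ} (W : Submodule F (Fin n → F)) (v : Fin n → F) :
    ((fun x => v + x) '' (W : Set (Fin n → F))).ncard
      = Fintype.card F ^ Module.finrank F W := by
  rw [Set.ncard_image_of_injective _ (add_right_injective v)]
  rw [← Nat.card_coe_set_eq, SetLike.coe_sort_coe, Nat.card_eq_fintype_card]
  exact Module.card_eq_pow_finrank (K := F)

lemma affineSpan_coe_eq_coset {n : ℕ} (Z : Set (Fin n → F)) {z : Fin n → F} (hz : z ∈ Z) :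
    ((affineSpan F Z : AffineSubspace F (Fin n → F)) : Set (Fin n → F))
      = (fun x => z + x) '' ((affineSpan F Z).direction : Set (Fin n → F)) := by
  have hzA : z ∈ affineSpan F Z := subset_affineSpan F Z hz
  ext x
  constructor
  · intro hx
    refine ⟨x - z, ?_, by simp⟩
    have := AffineSubspace.vsub_mem_direction hx hzA
    rwa [vsub_eq_sub] at this
  · rintro ⟨w, hw, rfl⟩
    have := AffineSubspace.vadd_mem_of_mem_direction hw hzA
    rwa [vadd_eq_add, add_comm] at this
end AF
/-- A set of points in `F^n` is in general position if no `m` of them lie in an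
`(m-2)`-dimensional affine space for `2 ≤ m ≤ n+1`. -/
def InGeneralPosition {F : Type*} [Field F] {n : ℕ} (T : Set (Fin n → F)) : Prop :=
  ∀ A : Finset (Fin n → F), ↑A ⊆ T → 2 ≤ A.card → A.card ≤ n + 1 →
    ∀ (W : Submodule F (Fin n → F)) (w : Fin n → F),
      Module.finrank F W = A.card - 2 →
      ¬(↑A ⊆ (fun x => w + x) '' (W : Set (Fin n → F)))

theorem stmt_8 (q n r : ℕ) (F : Type*) [Field F] [Fintype F]
    (hq : Fintype.card F = q)
    (f : Fin r → MvPolynomial (Fin n) F)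
    (d : ℕ) (hd : d = ∑ i, (f i).totalDegree) (hdn : d < n)
    (Z : Set (Fin n → F))
    (hZ : Z = {x | ∀ i, MvPolynomial.eval x (f i) = 0})
    (hne : Z.Nonempty)
    (hna : ¬∃ (W : Submodule F (Fin n → F)) (v : Fin n → F),
        Z = (fun x => v + x) '' (W : Set (Fin n → F))) :
    ∃ T ⊆ Z, n + 2 - d ≤ T.ncard ∧ InGeneralPosition T := by
  classical
  have hZfin : Z.Finite := Set.toFinite Z
  -- Warning's bound
  have hwar : Fintype.card F ^ (n - d) ≤ Z.ncard := by
    have hb := warning_bound f d hd hdn (by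
      obtain ⟨x, hx⟩ := hne
      rw [hZ] at hx
      exact ⟨x, hx⟩)
    have hZeq : Z = ↑(Finset.univ.filter fun x : Fin n → F =>
        ∀ i, MvPolynomial.eval x (f i) = 0) := by
      rw [hZ]; ext x; simp
    rw [hZeq, Set.ncard_coe_finset]
    exact hb
  obtain ⟨t, htZ, htspan, htind⟩ := exists_affineIndependent F (Fin n → F) Z
  have htfin : t.Finite := hZfin.subset htZ
  set m := Module.finrank F (vectorSpan F Z) with hm
  have hvs : vectorSpan F t = vectorSpan F Z := by
    rw [← direction_affineSpan, htspan, direction_affineSpan]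
  by_cases hcase : m ≤ n - d
  · -- Z would be an affine subspace : contradiction
    exfalso
    obtain ⟨z, hzZ⟩ := hne
    have hAco := affineSpan_coe_eq_coset Z hzZ
    have hcard : ((affineSpan F Z : AffineSubspace F (Fin n → F)) : Set (Fin n → F)).ncard
        = Fintype.card F ^ m := by
      rw [hAco, coset_ncard, direction_affineSpan]
    have hle : ((affineSpan F Z : AffineSubspace F (Fin n → F)) : Set (Fin n → F)).ncard
        ≤ Z.ncard := by
      rw [hcard]
      exact le_trans (Nat.pow_le_pow_right Fintype.card_pos hcase) hwar
    have hZA : Z = ((affineSpan F Z : AffineSubspace F (Fin n → F)) : Set (Fin n → F)) :=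
      Set.eq_of_subset_of_ncard_le (subset_affineSpan F Z) hle (Set.toFinite _)
    exact hna ⟨(affineSpan F Z).direction, z, by rw [← hAco]; exact hZA⟩
  · push_neg at hcase
    refine ⟨t, htZ, ?_, ?_⟩
    · -- cardinality bound
      have hub : m ≤ t.ncard - 1 := by
        rcases t.eq_empty_or_nonempty with rfl | hte
        · exfalso
          rw [vectorSpan_empty] at hvs
          rw [hm, ← hvs, finrank_bot] at hcase
          omega
        · have hcard : htfin.toFinset.card = (t.ncard - 1) + 1 := by
            rw [← Set.ncard_eq_toFinset_card t htfin]
            have : 0 < t.ncard := (Set.ncard_pos htfin).mpr hte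
            omega
          have hfr := finrank_vectorSpan_image_finset_le F id htfin.toFinset hcard
          rw [Finset.image_id, Set.Finite.coe_toFinset] at hfr
          rw [hm, ← hvs]
          exact hfr
      omega
    · -- general position
      intro A hAt h2 hn1 W w hW hsub
      have hAi : AffineIndependent F ((↑) : (↑A : Set (Fin n → F)) → (Fin n → F)) :=
        htind.mono hAt
      have hAcard : Fintype.card (↑A : Set (Fin n → F)) = (A.card - 1) + 1 := by
        have hc : Fintype.card (↑A : Set (Fin n → F)) = A.card := by simp
        omega
      have hfr := hAi.finrank_vectorSpan hAcard
      rw [Subtype.range_coe] at hfr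
      have hWle : vectorSpan F (↑A : Set (Fin n → F)) ≤ W := by
        rw [vectorSpan_def]
        refine Submodule.span_le.mpr ?_
        intro v hv
        rw [Set.mem_vsub] at hv
        obtain ⟨x, hx, y, hy, rfl⟩ := hv
        obtain ⟨u, hu, rfl⟩ := hsub hx
        obtain ⟨u', hu', rfl⟩ := hsub hy
        rw [vsub_eq_sub]
        show w + u - (w + u') ∈ W
        have : w + u - (w + u') = u - u' := by abel
        rw [this]
        exact sub_mem hu hu'
      have hmono := Submodule.finrank_mono hWle
      rw [hfr, hW] at hmono
      omega
end

section
/- Let q = 2 and let f be a system of polynomials in F_2[x_1,...,x_n] of total degree d with n > d. If Z(f, F_2^n) is nonempty and is not an affine subspace of F_2^n, then N(f, F_2^n) ≥ 2^(n-d) + 2. -/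
open MvPolynomial

namespace HBaux

abbrev V (n : ℕ) := Fin n → ZMod 2

lemma two_cases : ∀ c : ZMod 2, c = 0 ∨ c = 1 := by decide

lemma vadd_self {n : ℕ} (x : V n) : x + x = 0 := by
  funext i
  exact CharTwo.add_self_eq_zero _

lemma cons_add_cons {n : ℕ} (a b : ZMod 2) (x y : V n) :
    (Fin.cons a x : V (n+1)) + Fin.cons b y = Fin.cons (a + b) (x + y) := by
  funext i
  refine Fin.cases ?_ ?_ i <;> simp

lemma triple_eq {n : ℕ} (u v w : V n) : u + v + (u + v + w) = w := by
  funext i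
  simp only [Pi.add_apply]
  generalize u i = a
  generalize v i = b
  generalize w i = c
  revert a b c; decide

def AffineLike {n : ℕ} (S : Finset (V n)) : Prop :=
  ∀ x ∈ S, ∀ y ∈ S, ∀ z ∈ S, x + y + z ∈ S

def supp {n : ℕ} (g : V n → ZMod 2) : Finset (V n) :=
  Finset.univ.filter fun x => g x = 1

lemma mem_supp {n : ℕ} {g : V n → ZMod 2} {x : V n} : x ∈ supp g ↔ g x = 1 := by
  simp [supp]

def HasDeg (n d : ℕ) (g : V n → ZMod 2) : Prop :=
  ∃ p : MvPolynomial (Fin n) (ZMod 2), p.totalDegree ≤ d ∧ ∀ x, eval x p = g x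

lemma eval_const_of_deg_zero {n : ℕ} {p : MvPolynomial (Fin n) (ZMod 2)}
    (hp : p.totalDegree = 0) (x y : V n) : eval x p = eval y p := by
  rw [eval_eq, eval_eq]
  apply Finset.sum_congr rfl
  intro m hm
  have hm0 : m = 0 := Finsupp.ext ((totalDegree_eq_zero_iff _ p).mp hp m hm)
  rw [hm0]
  simp

lemma key0 {n : ℕ} {g : V n → ZMod 2} (h : HasDeg n 0 g) (hne : (supp g).Nonempty) :
    supp g = Finset.univ := by
  obtain ⟨p, hp, hev⟩ := h
  obtain ⟨x0, hx0⟩ := hne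
  rw [mem_supp] at hx0
  ext x
  simp only [Finset.mem_univ, iff_true, mem_supp]
  rw [← hev x, eval_const_of_deg_zero (Nat.le_zero.mp hp) x x0, hev, hx0]

lemma triv_case {n : ℕ} {S : Finset (V n)} (hne : S.Nonempty) :
    1 ≤ S.card ∧ (S.card = 1 → AffineLike S) := by
  refine ⟨hne.card_pos, fun h1 => ?_⟩
  obtain ⟨v, rfl⟩ := Finset.card_eq_one.mp h1
  intro x hx y hy z hz
  simp only [Finset.mem_singleton] at *
  subst hx; subst hy; subst hz
  rw [vadd_self, zero_add]

lemma slice {n : ℕ} (d : ℕ) (g : V (n+1) → ZMod 2) (h : HasDeg (n+1) d g) :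
    HasDeg n d (fun x => g (Fin.cons 0 x)) ∧
    HasDeg n (d - 1) (fun x => g (Fin.cons 0 x) + g (Fin.cons 1 x)) := by
  obtain ⟨p, hp, hev⟩ := h
  set q : Polynomial (MvPolynomial (Fin n) (ZMod 2)) := finSuccEquiv (ZMod 2) n p with hqdef
  have hkey : ∀ (y : ZMod 2) (x : V n),
      g (Fin.cons y x) = Polynomial.eval y (q.map (eval x)) := by
    intro y x
    rw [← hev, eval_eq_eval_mv_eval']
  have hcoeff : ∀ i, q.coeff i ≠ 0 → (q.coeff i).totalDegree + i ≤ d :=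
    fun i hi => le_trans (totalDegree_coeff_finSuccEquiv_add_le p i hi) hp
  have h0 : ∀ x, g (Fin.cons 0 x) = eval x (q.coeff 0) := by
    intro x
    rw [hkey 0 x, ← Polynomial.coeff_zero_eq_eval_zero, Polynomial.coeff_map]
  constructor
  · refine ⟨q.coeff 0, ?_, fun x => (h0 x).symm⟩
    by_cases hc : q.coeff 0 = 0
    · simp [hc]
    · simpa using hcoeff 0 hc
  · refine ⟨∑ i ∈ Finset.range q.natDegree, q.coeff (i + 1), ?_, ?_⟩
    · apply totalDegree_finsetSum_le
      intro i _
      by_cases hc : q.coeff (i + 1) = 0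
      · simp [hc]
      · have := hcoeff (i + 1) hc
        omega
    · intro x
      show eval x (∑ i ∈ Finset.range q.natDegree, q.coeff (i + 1)) =
        g (Fin.cons 0 x) + g (Fin.cons 1 x)
      have h1 : g (Fin.cons 1 x) =
          ∑ i ∈ Finset.range (q.natDegree + 1), eval x (q.coeff i) := by
        rw [hkey 1 x, Polynomial.eval_eq_sum_range' (n := q.natDegree + 1)
          (Nat.lt_succ_of_le Polynomial.natDegree_map_le)]
        simp [Polynomial.coeff_map]
      rw [map_sum, h0, h1, Finset.sum_range_succ']
      generalize (∑ i ∈ Finset.range q.natDegree, eval x (q.coeff (i + 1))) = s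
      generalize eval x (q.coeff 0) = a
      revert s a; decide

lemma cons_injective {n : ℕ} (c : ZMod 2) :
    Function.Injective (fun x : V n => (Fin.cons c x : V (n+1))) := by
  intro x y hxy
  have := congrArg Fin.tail hxy
  simpa [Fin.tail_cons] using this

lemma supp_decomp {n : ℕ} (g : V (n+1) → ZMod 2) :
    supp g = ((supp fun x => g (Fin.cons 0 x)).image (fun x => (Fin.cons 0 x : V (n+1)))) ∪
      ((supp fun x => g (Fin.cons 1 x)).image (fun x => (Fin.cons 1 x : V (n+1)))) := by
  ext v
  simp only [Finset.mem_union, Finset.mem_image, mem_supp]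
  constructor
  · intro hv
    rcases two_cases (v 0) with h | h
    · have hsv : (Fin.cons 0 (Fin.tail v) : V (n+1)) = v := by
        rw [← h]; exact Fin.cons_self_tail v
      exact Or.inl ⟨Fin.tail v, by rw [hsv]; exact hv, hsv⟩
    · have hsv : (Fin.cons 1 (Fin.tail v) : V (n+1)) = v := by
        rw [← h]; exact Fin.cons_self_tail v
      exact Or.inr ⟨Fin.tail v, by rw [hsv]; exact hv, hsv⟩
  · rintro (⟨x, hx, rfl⟩ | ⟨x, hx, rfl⟩) <;> exact hx

lemma card_supp {n : ℕ} (g : V (n+1) → ZMod 2) :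
    (supp g).card = (supp fun x => g (Fin.cons 0 x)).card +
      (supp fun x => g (Fin.cons 1 x)).card := by
  rw [supp_decomp g, Finset.card_union_of_disjoint, Finset.card_image_of_injective _
    (cons_injective 0), Finset.card_image_of_injective _ (cons_injective 1)]
  rw [Finset.disjoint_left]
  intro v hv1 hv2
  obtain ⟨x, -, rfl⟩ := Finset.mem_image.mp hv1
  obtain ⟨y, -, hy⟩ := Finset.mem_image.mp hv2
  have := congrFun hy 0
  simp only [Fin.cons_zero] at this
  exact one_ne_zero this

lemma affine_step {m : ℕ} {g : V (m+1) → ZMod 2}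
    (H : ∀ (a b c : ZMod 2) (x y z : V m), Fin.cons a x ∈ supp g → Fin.cons b y ∈ supp g →
      Fin.cons c z ∈ supp g → Fin.cons (a + b + c) (x + y + z) ∈ supp g) :
    AffineLike (supp g) := by
  intro u hu v hv w hw
  have h := H (u 0) (v 0) (w 0) (Fin.tail u) (Fin.tail v) (Fin.tail w)
    (by rwa [Fin.cons_self_tail]) (by rwa [Fin.cons_self_tail]) (by rwa [Fin.cons_self_tail])
  rw [← cons_add_cons, ← cons_add_cons, Fin.cons_self_tail, Fin.cons_self_tail,
    Fin.cons_self_tail] at h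
  exact h

lemma core3 {n : ℕ} {S0 S1 : Finset (V n)} (hdisj : Disjoint S0 S1)
    (a0 : AffineLike S0) (aU : AffineLike (S0 ∪ S1))
    {x y z : V n} (hx : x ∈ S0) (hy : y ∈ S0) (hz : z ∈ S1) : x + y + z ∈ S1 := by
  have hu : x + y + z ∈ S0 ∪ S1 :=
    aU x (Finset.mem_union_left _ hx) y (Finset.mem_union_left _ hy) z
      (Finset.mem_union_right _ hz)
  rcases Finset.mem_union.mp hu with hs | hs
  · exfalso
    have h2 : x + y + (x + y + z) ∈ S0 := a0 x hx y hy _ hs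
    rw [triple_eq] at h2
    exact Finset.disjoint_left.mp hdisj h2 hz
  · exact hs

lemma core {n : ℕ} {S0 S1 : Finset (V n)} (hdisj : Disjoint S0 S1)
    (a0 : AffineLike S0) (a1 : AffineLike S1) (aU : AffineLike (S0 ∪ S1))
    (a b c : ZMod 2) {x y z : V n}
    (hx : x ∈ if a = 1 then S1 else S0) (hy : y ∈ if b = 1 then S1 else S0)
    (hz : z ∈ if c = 1 then S1 else S0) :
    x + y + z ∈ if a + b + c = 1 then S1 else S0 := by
  have aU' : AffineLike (S1 ∪ S0) := by rwa [Finset.union_comm]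
  have comm1 : x + y + z = x + z + y := by ring
  have comm2 : x + y + z = y + z + x := by ring
  rcases two_cases a with rfl | rfl <;> rcases two_cases b with rfl | rfl <;>
    rcases two_cases c with rfl | rfl <;>
    simp only [if_neg (show ¬((0 : ZMod 2) = 1) by decide),
      if_pos (show (1 : ZMod 2) = 1 from rfl)] at hx hy hz
  · rw [if_neg (show ¬((0 : ZMod 2) + 0 + 0 = 1) by decide)]
    exact a0 x hx y hy z hz
  · rw [if_pos (show (0 : ZMod 2) + 0 + 1 = 1 by decide)]
    exact core3 hdisj a0 aU hx hy hz
  · rw [if_pos (show (0 : ZMod 2) + 1 + 0 = 1 by decide), comm1]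
    exact core3 hdisj a0 aU hx hz hy
  · rw [if_neg (show ¬((0 : ZMod 2) + 1 + 1 = 1) by decide), comm2]
    exact core3 hdisj.symm a1 aU' hy hz hx
  · rw [if_pos (show (1 : ZMod 2) + 0 + 0 = 1 by decide), comm2]
    exact core3 hdisj a0 aU hy hz hx
  · rw [if_neg (show ¬((1 : ZMod 2) + 0 + 1 = 1) by decide), comm1]
    exact core3 hdisj.symm a1 aU' hx hz hy
  · rw [if_neg (show ¬((1 : ZMod 2) + 1 + 0 = 1) by decide)]
    exact core3 hdisj.symm a1 aU' hx hy hz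
  · rw [if_pos (show (1 : ZMod 2) + 1 + 1 = 1 by decide)]
    exact a1 x hx y hy z hz

theorem key : ∀ n d (g : V n → ZMod 2), HasDeg n d g → (supp g).Nonempty →
    2 ^ (n - d) ≤ (supp g).card ∧ ((supp g).card = 2 ^ (n - d) → AffineLike (supp g)) := by
  intro n
  induction n with
  | zero =>
    intro d g _ hne
    simp only [Nat.zero_sub, pow_zero]
    exact triv_case hne
  | succ m IH =>
    intro d g hdeg hne
    rcases Nat.eq_zero_or_pos d with rfl | hd1
    · have huniv := key0 hdeg hne
      have hcard : (Finset.univ : Finset (V (m+1))).card = 2 ^ (m + 1) := by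
        rw [Finset.card_univ, Fintype.card_fun, ZMod.card, Fintype.card_fin]
      rw [huniv, hcard, Nat.sub_zero]
      exact ⟨le_refl _, fun _ => fun x _ y _ z _ => Finset.mem_univ _⟩
    rcases le_or_gt (m + 1) d with hdn | hdn
    · rw [Nat.sub_eq_zero_of_le hdn, pow_zero]
      exact triv_case hne
    obtain ⟨e, rfl⟩ : ∃ e, d = e + 1 := ⟨d - 1, by omega⟩
    have hdm : e + 1 ≤ m := by omega
    obtain ⟨hA, hB⟩ := slice (e + 1) g hdeg
    simp only [Nat.add_sub_cancel] at hB
    have hcard := card_supp g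
    have hpow1 : 2 ^ (m + 1 - (e + 1)) = 2 * 2 ^ (m - (e + 1)) := by
      rw [show m + 1 - (e + 1) = (m - (e + 1)) + 1 by omega, pow_succ, mul_comm]
    have hpow2 : 2 ^ (m - e) = 2 * 2 ^ (m - (e + 1)) := by
      rw [show m - e = (m - (e + 1)) + 1 by omega, pow_succ, mul_comm]
    by_cases hbz : ∀ x, g (Fin.cons 0 x) = g (Fin.cons 1 x)
    · -- the two slices agree
      have hS10 : (supp fun x => g (Fin.cons 1 x)) = supp fun x => g (Fin.cons 0 x) := by
        ext x
        rw [mem_supp, mem_supp]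
        show g (Fin.cons 1 x) = 1 ↔ g (Fin.cons 0 x) = 1
        rw [hbz x]
      have hS0ne : (supp fun x => g (Fin.cons 0 x)).Nonempty := by
        obtain ⟨v, hv⟩ := hne
        rw [mem_supp] at hv
        refine ⟨Fin.tail v, mem_supp.mpr ?_⟩
        show g (Fin.cons 0 (Fin.tail v)) = 1
        rcases two_cases (v 0) with h | h
        · have hsv : (Fin.cons 0 (Fin.tail v) : V (m+1)) = v := by
            rw [← h]; exact Fin.cons_self_tail v
          rw [hsv]; exact hv
        · have hsv : (Fin.cons 1 (Fin.tail v) : V (m+1)) = v := by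
            rw [← h]; exact Fin.cons_self_tail v
          rw [hbz, hsv]; exact hv
      obtain ⟨hl, heq⟩ := IH (e + 1) _ hA hS0ne
      have hc : (supp g).card = 2 * (supp fun x => g (Fin.cons 0 x)).card := by
        rw [hcard, hS10]; omega
      constructor
      · omega
      · intro hEq
        have haff0 := heq (by omega)
        apply affine_step
        intro a b c x y z hx hy hz
        have hmem : ∀ (c : ZMod 2) (w : V m),
            (Fin.cons c w ∈ supp g ↔ w ∈ supp fun x => g (Fin.cons 0 x)) := by
          intro c w
          rcases two_cases c with rfl | rfl
          · rw [mem_supp, mem_supp]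
          · rw [mem_supp, mem_supp]
            show g (Fin.cons 1 w) = 1 ↔ g (Fin.cons 0 w) = 1
            rw [hbz w]
        rw [hmem] at hx hy hz ⊢
        exact haff0 x hx y hy z hz
    · -- the slices differ somewhere
      push_neg at hbz
      obtain ⟨x0, hx0⟩ := hbz
      have hSbne : (supp fun x => g (Fin.cons 0 x) + g (Fin.cons 1 x)).Nonempty := by
        refine ⟨x0, mem_supp.mpr ?_⟩
        show g (Fin.cons 0 x0) + g (Fin.cons 1 x0) = 1
        revert hx0
        generalize g (Fin.cons 0 x0) = a
        generalize g (Fin.cons 1 x0) = b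
        revert a b; decide
      obtain ⟨hbl, hbeq⟩ := IH e _ hB hSbne
      have hsub : (supp fun x => g (Fin.cons 0 x) + g (Fin.cons 1 x)) ⊆
          (supp fun x => g (Fin.cons 0 x)) ∪ (supp fun x => g (Fin.cons 1 x)) := by
        intro x hx
        rw [mem_supp] at hx
        replace hx : g (Fin.cons 0 x) + g (Fin.cons 1 x) = 1 := hx
        simp only [Finset.mem_union, mem_supp]
        revert hx
        generalize g (Fin.cons 0 x) = a
        generalize g (Fin.cons 1 x) = b
        revert a b; decide
      by_cases h0e : (supp fun x => g (Fin.cons 0 x)) = ∅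
      · have hg0z : ∀ x, g (Fin.cons 0 x) = 0 := by
          intro x
          have hx : x ∉ (supp fun x => g (Fin.cons 0 x)) := h0e ▸ Finset.notMem_empty x
          rw [mem_supp] at hx
          replace hx : ¬(g (Fin.cons 0 x) = 1) := hx
          revert hx
          generalize g (Fin.cons 0 x) = a
          revert a; decide
        have hSb1 : (supp fun x => g (Fin.cons 0 x) + g (Fin.cons 1 x)) =
            (supp fun x => g (Fin.cons 1 x)) := by
          ext x
          rw [mem_supp, mem_supp]
          show g (Fin.cons 0 x) + g (Fin.cons 1 x) = 1 ↔ g (Fin.cons 1 x) = 1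
          rw [hg0z, zero_add]
        have hc : (supp g).card = (supp fun x => g (Fin.cons 1 x)).card := by
          rw [hcard, h0e]; simp
        rw [hSb1] at hbl hbeq
        have hme : m + 1 - (e + 1) = m - e := by omega
        constructor
        · rw [hme, hc]; exact hbl
        · intro hEq
          rw [hme, hc] at hEq
          have haff1 := hbeq hEq
          apply affine_step
          intro a b c x y z hx hy hz
          have hmem : ∀ (c : ZMod 2) (w : V m), Fin.cons c w ∈ supp g →
              c = 1 ∧ w ∈ (supp fun x => g (Fin.cons 1 x)) := by
            intro c w hw
            rw [mem_supp] at hw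
            rcases two_cases c with rfl | rfl
            · rw [hg0z] at hw; exact absurd hw (by decide)
            · exact ⟨rfl, mem_supp.mpr hw⟩
          obtain ⟨rfl, hx'⟩ := hmem _ _ hx
          obtain ⟨rfl, hy'⟩ := hmem _ _ hy
          obtain ⟨rfl, hz'⟩ := hmem _ _ hz
          rw [show (1 : ZMod 2) + 1 + 1 = 1 by decide]
          have hmm := mem_supp.mp (haff1 x hx' y hy' z hz')
          exact mem_supp.mpr hmm
      by_cases h1e : (supp fun x => g (Fin.cons 1 x)) = ∅
      · have hg1z : ∀ x, g (Fin.cons 1 x) = 0 := by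
          intro x
          have hx : x ∉ (supp fun x => g (Fin.cons 1 x)) := h1e ▸ Finset.notMem_empty x
          rw [mem_supp] at hx
          replace hx : ¬(g (Fin.cons 1 x) = 1) := hx
          revert hx
          generalize g (Fin.cons 1 x) = a
          revert a; decide
        have hSb1 : (supp fun x => g (Fin.cons 0 x) + g (Fin.cons 1 x)) =
            (supp fun x => g (Fin.cons 0 x)) := by
          ext x
          rw [mem_supp, mem_supp]
          show g (Fin.cons 0 x) + g (Fin.cons 1 x) = 1 ↔ g (Fin.cons 0 x) = 1
          rw [hg1z, add_zero]
        have hc : (supp g).card = (supp fun x => g (Fin.cons 0 x)).card := by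
          rw [hcard, h1e]; simp
        rw [hSb1] at hbl hbeq
        have hme : m + 1 - (e + 1) = m - e := by omega
        constructor
        · rw [hme, hc]; exact hbl
        · intro hEq
          rw [hme, hc] at hEq
          have haff0 := hbeq hEq
          apply affine_step
          intro a b c x y z hx hy hz
          have hmem : ∀ (c : ZMod 2) (w : V m), Fin.cons c w ∈ supp g →
              c = 0 ∧ w ∈ (supp fun x => g (Fin.cons 0 x)) := by
            intro c w hw
            rw [mem_supp] at hw
            rcases two_cases c with rfl | rfl
            · exact ⟨rfl, mem_supp.mpr hw⟩
            · rw [hg1z] at hw; exact absurd hw (by decide)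
          obtain ⟨rfl, hx'⟩ := hmem _ _ hx
          obtain ⟨rfl, hy'⟩ := hmem _ _ hy
          obtain ⟨rfl, hz'⟩ := hmem _ _ hz
          rw [show (0 : ZMod 2) + 0 + 0 = 0 by decide]
          have hmm := mem_supp.mp (haff0 x hx' y hy' z hz')
          exact mem_supp.mpr hmm
      · -- both slices nonempty
        have hS0ne := Finset.nonempty_iff_ne_empty.mpr h0e
        have hS1ne := Finset.nonempty_iff_ne_empty.mpr h1e
        have hg1deg : HasDeg m (e + 1) (fun x => g (Fin.cons 1 x)) := by
          obtain ⟨p0, hp0, he0⟩ := hA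
          obtain ⟨pb, hpb, heb⟩ := hB
          refine ⟨p0 + pb, le_trans (totalDegree_add _ _)
            (max_le hp0 (le_trans hpb (Nat.le_succ e))), ?_⟩
          intro x
          have he0' : eval x p0 = g (Fin.cons 0 x) := he0 x
          have heb' : eval x pb = g (Fin.cons 0 x) + g (Fin.cons 1 x) := heb x
          show eval x (p0 + pb) = g (Fin.cons 1 x)
          rw [map_add, he0', heb']
          generalize g (Fin.cons 0 x) = a
          generalize g (Fin.cons 1 x) = b
          revert a b; decide
        obtain ⟨hl0, heq0⟩ := IH (e + 1) _ hA hS0ne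
        obtain ⟨hl1, heq1⟩ := IH (e + 1) _ hg1deg hS1ne
        constructor
        · omega
        · intro hEq
          have hc0 : (supp fun x => g (Fin.cons 0 x)).card = 2 ^ (m - (e + 1)) := by omega
          have hc1 : (supp fun x => g (Fin.cons 1 x)).card = 2 ^ (m - (e + 1)) := by omega
          have haff0 := heq0 hc0
          have haff1 := heq1 hc1
          have hcardU : ((supp fun x => g (Fin.cons 0 x)) ∪
              (supp fun x => g (Fin.cons 1 x))).card ≤ 2 ^ (m - e) := by
            have := Finset.card_union_le (supp fun x => g (Fin.cons 0 x))
              (supp fun x => g (Fin.cons 1 x))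
            omega
          have hSbU : (supp fun x => g (Fin.cons 0 x) + g (Fin.cons 1 x)) =
              (supp fun x => g (Fin.cons 0 x)) ∪ (supp fun x => g (Fin.cons 1 x)) :=
            Finset.eq_of_subset_of_card_le hsub (by omega)
          have hcardSb : (supp fun x => g (Fin.cons 0 x) + g (Fin.cons 1 x)).card
              = 2 ^ (m - e) := by
            have h1 : (supp fun x => g (Fin.cons 0 x) + g (Fin.cons 1 x)).card
                ≤ 2 ^ (m - e) := by
              rw [hSbU]; exact hcardU
            omega
          have haffU := hbeq hcardSb
          rw [hSbU] at haffU
          have hdisj : Disjoint (supp fun x => g (Fin.cons 0 x))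
              (supp fun x => g (Fin.cons 1 x)) := by
            rw [Finset.disjoint_iff_inter_eq_empty, ← Finset.card_eq_zero]
            have := Finset.card_union_add_card_inter (supp fun x => g (Fin.cons 0 x))
              (supp fun x => g (Fin.cons 1 x))
            rw [hSbU] at hcardSb
            omega
          apply affine_step
          intro a b c x y z hx hy hz
          have hmem : ∀ (c : ZMod 2) (w : V m), (Fin.cons c w ∈ supp g ↔
              w ∈ (if c = 1 then (supp fun x => g (Fin.cons 1 x))
                else (supp fun x => g (Fin.cons 0 x)))) := by
            intro c w
            rcases two_cases c with rfl | rfl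
            · rw [if_neg (show ¬((0 : ZMod 2) = 1) by decide), mem_supp, mem_supp]
            · rw [if_pos rfl, mem_supp, mem_supp]
          rw [hmem] at hx hy hz ⊢
          exact core hdisj haff0 haff1 haffU a b c hx hy hz

lemma coset_of_affineLike {n : ℕ} (S : Finset (V n)) (hne : S.Nonempty) (h : AffineLike S) :
    ∃ (W : Submodule (ZMod 2) (V n)) (v : V n),
      (S : Set (V n)) = (fun x => v + x) '' (W : Set (V n)) := by
  obtain ⟨v, hv⟩ := hne
  have hid : ∀ a b c : V n, (c + a) + (c + b) = c + (a + b + c) := by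
    intro a b c
    funext i
    simp only [Pi.add_apply]
    generalize a i = p; generalize b i = q; generalize c i = r
    revert p q r; decide
  have hinv : ∀ a : V n, v + (v + a) = a := by
    intro a
    funext i
    simp only [Pi.add_apply]
    generalize a i = p; generalize v i = r
    revert p r; decide
  refine ⟨{
    carrier := (fun x => v + x) '' (S : Set (V n))
    add_mem' := ?_
    zero_mem' := ?_
    smul_mem' := ?_ }, v, ?_⟩
  · rintro a b ⟨x, hx, rfl⟩ ⟨y, hy, rfl⟩
    exact ⟨x + y + v, h x hx y hy v hv, (hid x y v).symm⟩
  · refine ⟨v, hv, ?_⟩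
    funext i
    simp only [Pi.add_apply]
    exact CharTwo.add_self_eq_zero _
  · rintro c a ⟨x, hx, rfl⟩
    rcases two_cases c with rfl | rfl
    · rw [zero_smul]
      refine ⟨v, hv, ?_⟩
      funext i
      simp only [Pi.add_apply]
      exact CharTwo.add_self_eq_zero _
    · rw [one_smul]
      exact ⟨x, hx, rfl⟩
  · ext y
    constructor
    · intro hy
      exact ⟨v + y, ⟨y, hy, rfl⟩, hinv y⟩
    · rintro ⟨w, ⟨x, hx, rfl⟩, rfl⟩
      show v + (v + x) ∈ (S : Set (V n))
      rw [hinv]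
      exact hx

end HBaux

theorem stmt_9 (n r : ℕ)
    (f : Fin r → MvPolynomial (Fin n) (ZMod 2))
    (d : ℕ) (hd : d = ∑ i, (f i).totalDegree) (hdn : d < n)
    (Z : Set (Fin n → ZMod 2))
    (hZ : Z = {x | ∀ i, MvPolynomial.eval x (f i) = 0})
    (hne : Z.Nonempty)
    (hna : ¬∃ (W : Submodule (ZMod 2) (Fin n → ZMod 2)) (v : Fin n → ZMod 2),
        Z = (fun x => v + x) '' (W : Set (Fin n → ZMod 2))) :
    2 ^ (n - d) + 2 ≤ Z.ncard := by
  classical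
  subst hZ
  set g : HBaux.V n → ZMod 2 := fun x => MvPolynomial.eval x (∏ i, (1 + f i)) with hg
  have hgx : ∀ x, g x = ∏ i, (1 + MvPolynomial.eval x (f i)) := by
    intro x
    rw [hg]
    simp [map_prod]
  have hgiff : ∀ x, g x = 1 ↔ ∀ i, MvPolynomial.eval x (f i) = 0 := by
    intro x
    rw [hgx]
    constructor
    · intro h i
      by_contra hi
      have hi1 : MvPolynomial.eval x (f i) = 1 := by
        revert hi; generalize MvPolynomial.eval x (f i) = a; revert a; decide
      have hz : (∏ j, (1 + MvPolynomial.eval x (f j))) = 0 :=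
        Finset.prod_eq_zero (Finset.mem_univ i) (by rw [hi1]; decide)
      rw [hz] at h
      exact absurd h (by decide)
    · intro h
      apply Finset.prod_eq_one
      intro i _
      rw [h i, add_zero]
  have hdeg : HBaux.HasDeg n d g := by
    refine ⟨∏ i, (1 + f i), ?_, fun x => by rw [hg]⟩
    refine le_trans (MvPolynomial.totalDegree_finset_prod _ _) ?_
    rw [hd]
    apply Finset.sum_le_sum
    intro i _
    refine le_trans (MvPolynomial.totalDegree_add _ _) ?_
    simp [MvPolynomial.totalDegree_one]
  have hsupp : ((HBaux.supp g : Finset (HBaux.V n)) : Set (HBaux.V n)) =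
      {x | ∀ i, MvPolynomial.eval x (f i) = 0} := by
    ext x
    simp only [Finset.coe_filter, HBaux.supp, Set.mem_setOf_eq, Finset.mem_univ, true_and]
    exact hgiff x
  have hsne : (HBaux.supp g).Nonempty := by
    obtain ⟨x, hx⟩ := hne
    exact ⟨x, HBaux.mem_supp.mpr ((hgiff x).mpr hx)⟩
  obtain ⟨hlow, heq⟩ := HBaux.key n d g hdeg hsne
  have hncard : ({x | ∀ i, MvPolynomial.eval x (f i) = 0} :
      Set (Fin n → ZMod 2)).ncard = (HBaux.supp g).card := by
    rw [← hsupp, Set.ncard_coe_finset]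
  have hne2 : (HBaux.supp g).card ≠ 2 ^ (n - d) := by
    intro hc
    obtain ⟨W, v, hWv⟩ := HBaux.coset_of_affineLike _ hsne (heq hc)
    exact hna ⟨W, v, by rw [← hsupp, hWv]⟩
  have hparity : 2 ∣ (HBaux.supp g).card := by
    haveI : Fact (Nat.Prime 2) := ⟨Nat.prime_two⟩
    have hcw := char_dvd_card_solutions_of_fintype_sum_lt (K := ZMod 2) (σ := Fin n) 2
      (f := f) (by rw [← hd]; simpa using hdn)
    rw [Fintype.card_eq_nat_card] at hcw
    have h1 : Nat.card {x : Fin n → ZMod 2 // ∀ i, MvPolynomial.eval x (f i) = 0}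
        = ({x | ∀ i, MvPolynomial.eval x (f i) = 0} :
          Set (Fin n → ZMod 2)).ncard := by
      rw [← Nat.card_coe_set_eq]
      exact Nat.card_congr (Equiv.subtypeEquivRight fun x => Iff.rfl)
    rw [h1, hncard] at hcw
    exact hcw
  have hpowdvd : 2 ∣ 2 ^ (n - d) := dvd_pow_self 2 (by omega)
  rw [hncard]
  omega
end

section
/- For every integer d ≥ 2 there exists a homogeneous form f of degree d in F_2[x_1,...,x_{d+1}] such that f has exactly 4 zeros in F_2^{d+1} and the zero set of f is not an affine subspace of F_2^{d+1}. -/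
open MvPolynomial Finset

namespace Stmt14Aux

variable (d : ℕ)

/-- indices -/
def i0 : Fin (d+1) := ⟨0, by omega⟩
def i1 (hd : 2 ≤ d) : Fin (d+1) := ⟨1, by omega⟩
def i2 (hd : 2 ≤ d) : Fin (d+1) := ⟨2, by omega⟩

def U2 : Finset (Fin (d+1)) := Finset.univ.filter (fun i => 2 ≤ (i : ℕ))
def U3 : Finset (Fin (d+1)) := Finset.univ.filter (fun i => 3 ≤ (i : ℕ))

def wA (S : Finset (Fin (d+1))) : Fin (d+1) → ℕ :=
  fun i => if i ∈ S then (if ∀ j ∈ S, i ≤ j then d + 1 - S.card else 1) else 0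

def wB (T : Finset (Fin (d+1))) : Fin (d+1) → ℕ :=
  fun i => if (i : ℕ) = 0 then d - 1 - T.card else if (i : ℕ) = 1 then 1
    else if i ∈ T then 1 else 0

noncomputable def F : MvPolynomial (Fin (d+1)) (ZMod 2) :=
  (∑ S ∈ (U2 d).powerset.filter (·.Nonempty),
    monomial (Finsupp.equivFunOnFinite.symm (wA d S)) 1)
  + ∑ T ∈ (U3 d).powerset, monomial (Finsupp.equivFunOnFinite.symm (wB d T)) 1

lemma degree_symm {m : ℕ} (w : Fin m → ℕ) :
    (Finsupp.equivFunOnFinite.symm w).degree = ∑ i, w i := by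
  rw [Finsupp.degree_apply, Finset.sum_subset (Finset.subset_univ _)]
  · simp
  · intro i _ h
    simpa using Finsupp.notMem_support_iff.mp h

lemma zmod2_cases (x : ZMod 2) : x = 0 ∨ x = 1 := by revert x; decide

lemma zmod2_pow (x : ZMod 2) {k : ℕ} (hk : k ≠ 0) : x ^ k = x := by
  rcases zmod2_cases x with rfl | rfl
  · exact zero_pow hk
  · exact one_pow k

lemma cardA {S : Finset (Fin (d+1))} (hS : S ⊆ U2 d) : S.card ≤ d := by
  have h0 : S ⊆ Finset.univ.erase (i0 d) := by
    intro i hi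
    have := hS hi
    simp only [U2, Finset.mem_filter] at this
    refine Finset.mem_erase.mpr ⟨?_, Finset.mem_univ _⟩
    intro h; rw [h] at this; simp [i0] at this
  calc S.card ≤ (Finset.univ.erase (i0 d)).card := Finset.card_le_card h0
    _ = (d + 1) - 1 := by rw [Finset.card_erase_of_mem (Finset.mem_univ _)]; simp
    _ = d := by omega

lemma cardB (hd : 2 ≤ d) {T : Finset (Fin (d+1))} (hT : T ⊆ U3 d) : T.card + 3 ≤ d + 1 := by
  have hdisj : Disjoint T ({i0 d, i1 d hd, i2 d hd} : Finset (Fin (d+1))) := by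
    rw [Finset.disjoint_right]
    intro i hi hiT
    have := hT hiT
    simp only [U3, Finset.mem_filter] at this
    simp only [Finset.mem_insert, Finset.mem_singleton] at hi
    rcases hi with rfl | rfl | rfl <;> simp [i0, i1, i2] at this
  have hcard3 : ({i0 d, i1 d hd, i2 d hd} : Finset (Fin (d+1))).card = 3 := by
    rw [Finset.card_insert_of_notMem, Finset.card_insert_of_notMem, Finset.card_singleton]
    · simp [i1, i2, Fin.ext_iff]
    · simp [i0, i1, i2, Fin.ext_iff]
  have := Finset.card_union_of_disjoint hdisj
  have hle := Finset.card_le_card (Finset.subset_univ (T ∪ {i0 d, i1 d hd, i2 d hd}))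
  rw [Finset.card_univ, Fintype.card_fin] at hle
  omega

lemma sum_wA {S : Finset (Fin (d+1))} (hS : S.Nonempty) (hsub : S ⊆ U2 d) :
    ∑ i, wA d S i = d := by
  have hcard := cardA d hsub
  have hpos := Finset.card_pos.mpr hS
  have h1 : ∑ i, wA d S i = ∑ i ∈ S, wA d S i := by
    rw [Finset.sum_subset (Finset.subset_univ S)]
    intro i _ hi
    simp [wA, hi]
  set m := S.min' hS with hm
  have hmem : m ∈ S := S.min'_mem hS
  have h2 : ∑ i ∈ S, wA d S i = wA d S m + ∑ i ∈ S.erase m, wA d S i :=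
    (Finset.add_sum_erase S _ hmem).symm
  have h3 : wA d S m = d + 1 - S.card := by
    simp only [wA, if_pos hmem]
    rw [if_pos]
    intro j hj
    exact S.min'_le j hj
  have h4 : ∑ i ∈ S.erase m, wA d S i = S.card - 1 := by
    rw [Finset.sum_congr rfl (g := fun _ => 1)]
    · simp [Finset.card_erase_of_mem hmem]
    · intro i hi
      obtain ⟨hne, hiS⟩ := Finset.mem_erase.mp hi
      simp only [wA, if_pos hiS]
      rw [if_neg]
      push_neg
      exact ⟨m, hmem, lt_of_le_of_ne (S.min'_le i hiS) (Ne.symm (by simpa using hne))⟩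
  rw [h1, h2, h3, h4]
  omega

lemma sum_wB (hd : 2 ≤ d) {T : Finset (Fin (d+1))} (hT : T ⊆ U3 d) :
    ∑ i, wB d T i = d := by
  have hcard := cardB d hd hT
  have h03 : i0 d ∉ T ∧ i1 d hd ∉ T ∧ i2 d hd ∉ T := by
    refine ⟨?_, ?_, ?_⟩ <;>
      { intro h; have := hT h; simp [U3, i0, i1, i2] at this }
  have h1 : ∑ i ∈ insert (i0 d) (insert (i1 d hd) T), wB d T i = ∑ i, wB d T i := by
    apply Finset.sum_subset (Finset.subset_univ _)
    intro i _ hi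
    simp only [Finset.mem_insert, not_or] at hi
    obtain ⟨h0, h1', hiT⟩ := hi
    have hv0 : (i : ℕ) ≠ 0 := fun h => h0 (Fin.ext h)
    have hv1 : (i : ℕ) ≠ 1 := fun h => h1' (Fin.ext h)
    simp [wB, hv0, hv1, hiT]
  have hnot0 : i0 d ∉ insert (i1 d hd) T := by
    simp only [Finset.mem_insert, not_or]
    exact ⟨by simp [i0, i1, Fin.ext_iff], h03.1⟩
  rw [← h1, Finset.sum_insert hnot0, Finset.sum_insert h03.2.1]
  have hw0 : wB d T (i0 d) = d - 1 - T.card := by simp [wB, i0]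
  have hw1 : wB d T (i1 d hd) = 1 := by simp [wB, i1]
  have hwT : ∑ i ∈ T, wB d T i = T.card := by
    rw [Finset.sum_congr rfl (g := fun _ => 1)]
    · simp
    · intro i hi
      have h3 : 3 ≤ (i : ℕ) := by
        have := hT hi; simpa [U3] using this
      have hv0 : (i : ℕ) ≠ 0 := by omega
      have hv1 : (i : ℕ) ≠ 1 := by omega
      simp [wB, hv0, hv1, hi]
  rw [hw0, hw1, hwT]
  omega

lemma homog (hd : 2 ≤ d) : (F d).IsHomogeneous d := by
  apply MvPolynomial.IsHomogeneous.add
  · apply MvPolynomial.IsHomogeneous.sum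
    intro S hS
    rw [Finset.mem_filter, Finset.mem_powerset] at hS
    exact isHomogeneous_monomial _ (by rw [degree_symm]; exact sum_wA d hS.2 hS.1)
  · apply MvPolynomial.IsHomogeneous.sum
    intro T hT
    rw [Finset.mem_powerset] at hT
    exact isHomogeneous_monomial _ (by rw [degree_symm]; exact sum_wB d hd hT)

lemma eval_mono (x : Fin (d+1) → ZMod 2) (w : Fin (d+1) → ℕ) :
    eval x (monomial (Finsupp.equivFunOnFinite.symm w) (1 : ZMod 2)) = ∏ i, x i ^ w i := by
  rw [eval_monomial, one_mul, Finsupp.prod_fintype]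
  · simp
  · intro i; exact pow_zero _

lemma prodA (x : Fin (d+1) → ZMod 2) {S : Finset (Fin (d+1))} (hsub : S ⊆ U2 d) :
    ∏ i, x i ^ wA d S i = ∏ i ∈ S, x i := by
  have hcard := cardA d hsub
  rw [← Finset.prod_subset (Finset.subset_univ S) (f := fun i => x i ^ wA d S i)]
  · apply Finset.prod_congr rfl
    intro i hi
    apply zmod2_pow
    simp only [wA, if_pos hi]
    split <;> omega
  · intro i _ hi
    simp [wA, hi]

lemma prodB (hd : 2 ≤ d) (x : Fin (d+1) → ZMod 2) {T : Finset (Fin (d+1))}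
    (hT : T ⊆ U3 d) :
    ∏ i, x i ^ wB d T i = x (i0 d) * x (i1 d hd) * ∏ i ∈ T, x i := by
  have hcard := cardB d hd hT
  have h03 : i0 d ∉ T ∧ i1 d hd ∉ T := by
    constructor <;> { intro h; have := hT h; simp [U3, i0, i1] at this }
  have hnot0 : i0 d ∉ insert (i1 d hd) T := by
    simp only [Finset.mem_insert, not_or]
    exact ⟨by simp [i0, i1, Fin.ext_iff], h03.1⟩
  rw [← Finset.prod_subset (Finset.subset_univ (insert (i0 d) (insert (i1 d hd) T)))
      (f := fun i => x i ^ wB d T i)]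
  · rw [Finset.prod_insert hnot0, Finset.prod_insert h03.2]
    have hw0 : wB d T (i0 d) = d - 1 - T.card := by simp [wB, i0]
    have hw1 : wB d T (i1 d hd) = 1 := by simp [wB, i1]
    have hprodT : ∏ i ∈ T, x i ^ wB d T i = ∏ i ∈ T, x i := by
      apply Finset.prod_congr rfl
      intro i hi
      have h3 : 3 ≤ (i : ℕ) := by
        have := hT hi
        simp only [U3, Finset.mem_filter] at this
        exact this.2
      have hv0 : (i : ℕ) ≠ 0 := by omega
      have hv1 : (i : ℕ) ≠ 1 := by omega
      simp [wB, hv0, hv1, hi]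
    rw [hprodT, hw0, hw1, zmod2_pow _ (by omega), pow_one, mul_assoc]
  · intro i _ hi
    simp only [Finset.mem_insert, not_or] at hi
    obtain ⟨h0, h1', hiT⟩ := hi
    have hv0 : (i : ℕ) ≠ 0 := fun h => h0 (Fin.ext h)
    have hv1 : (i : ℕ) ≠ 1 := fun h => h1' (Fin.ext h)
    simp [wB, hv0, hv1, hiT]

lemma sum_powerset_prod {m : ℕ} (s : Finset (Fin m)) (x : Fin m → ZMod 2) :
    ∑ t ∈ s.powerset, ∏ i ∈ t, x i = ∏ i ∈ s, (x i + 1) := by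
  rw [Finset.prod_add]
  simp

lemma eval_F (hd : 2 ≤ d) (x : Fin (d+1) → ZMod 2) :
    eval x (F d) = (∏ i ∈ U2 d, (x i + 1) + 1)
      + x (i0 d) * x (i1 d hd) * ∏ i ∈ U3 d, (x i + 1) := by
  rw [F, map_add, map_sum, map_sum]
  have hA : ∀ S ∈ (U2 d).powerset.filter (·.Nonempty),
      eval x (monomial (Finsupp.equivFunOnFinite.symm (wA d S)) (1 : ZMod 2))
        = ∏ i ∈ S, x i := by
    intro S hS
    rw [Finset.mem_filter, Finset.mem_powerset] at hS
    rw [eval_mono, prodA d x hS.1]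
  have hB : ∀ T ∈ (U3 d).powerset,
      eval x (monomial (Finsupp.equivFunOnFinite.symm (wB d T)) (1 : ZMod 2))
        = x (i0 d) * x (i1 d hd) * ∏ i ∈ T, x i := by
    intro T hT
    rw [Finset.mem_powerset] at hT
    rw [eval_mono, prodB d hd x hT]
  rw [Finset.sum_congr rfl hA, Finset.sum_congr rfl hB]
  have hBsum : ∑ T ∈ (U3 d).powerset, x (i0 d) * x (i1 d hd) * ∏ i ∈ T, x i
      = x (i0 d) * x (i1 d hd) * ∏ i ∈ U3 d, (x i + 1) := by
    rw [← Finset.mul_sum, sum_powerset_prod]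
  rw [hBsum]
  congr 1
  have hsplit := Finset.sum_filter_add_sum_filter_not (U2 d).powerset (·.Nonempty)
    (fun S => ∏ i ∈ S, x i)
  have hempty : (U2 d).powerset.filter (fun S => ¬ S.Nonempty) = {∅} := by
    ext S
    simp [Finset.not_nonempty_iff_eq_empty]
    intro h; subst h; exact Finset.empty_subset _
  rw [hempty] at hsplit
  simp only [Finset.sum_singleton, Finset.prod_empty] at hsplit
  rw [sum_powerset_prod] at hsplit
  have := eq_sub_of_add_eq hsplit
  rwa [CharTwo.sub_eq_add] at this

lemma eval_zero_iff (hd : 2 ≤ d) (x : Fin (d+1) → ZMod 2) :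
    eval x (F d) = 0 ↔
      (∀ i : Fin (d+1), 3 ≤ (i : ℕ) → x i = 0) ∧
        x (i2 d hd) = x (i0 d) * x (i1 d hd) := by
  rw [eval_F d hd]
  have hU2 : U2 d = insert (i2 d hd) (U3 d) := by
    ext i
    simp only [U2, U3, Finset.mem_filter, Finset.mem_insert, Finset.mem_univ, true_and]
    constructor
    · intro h
      by_cases h2 : (i : ℕ) = 2
      · exact Or.inl (Fin.ext (by simpa [i2] using h2))
      · exact Or.inr (by omega)
    · rintro (rfl | h)
      · norm_num [i2]
      · omega
  have hi2notU3 : i2 d hd ∉ U3 d := by simp [U3, i2]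
  rw [hU2, Finset.prod_insert hi2notU3]
  by_cases h : ∀ i ∈ U3 d, x i = 0
  · have hQ : ∏ i ∈ U3 d, (x i + 1) = 1 := by
      apply Finset.prod_eq_one
      intro i hi
      rw [h i hi, zero_add]
    rw [hQ, mul_one, mul_one]
    have hmem : ∀ i : Fin (d+1), 3 ≤ (i : ℕ) → x i = 0 := by
      intro i hi
      exact h i (by simp [U3, hi])
    rw [and_iff_right hmem]
    rcases zmod2_cases (x (i2 d hd)) with h2 | h2 <;>
      rcases zmod2_cases (x (i0 d)) with h0 | h0 <;>
        rcases zmod2_cases (x (i1 d hd)) with h1 | h1 <;>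
          rw [h2, h0, h1] <;> decide
  · push_neg at h
    obtain ⟨i, hiU, hix⟩ := h
    have hQ : ∏ j ∈ U3 d, (x j + 1) = 0 := by
      apply Finset.prod_eq_zero hiU
      rcases zmod2_cases (x i) with h0 | h1
      · exact absurd h0 hix
      · rw [h1]; decide
    rw [hQ]
    simp only [mul_zero, add_zero, zero_add]
    have h3 : 3 ≤ (i : ℕ) := by simpa [U3] using hiU
    constructor
    · intro h1; exact absurd h1 one_ne_zero
    · rintro ⟨hall, -⟩
      exact absurd (hall i h3) hix

def vf (hd : 2 ≤ d) (a b : ZMod 2) : Fin (d+1) → ZMod 2 :=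
  fun i => if i = i0 d then a else if i = i1 d hd then b else if i = i2 d hd then a * b else 0

lemma vf_apply (hd : 2 ≤ d) (a b : ZMod 2) :
    vf d hd a b (i0 d) = a ∧ vf d hd a b (i1 d hd) = b ∧ vf d hd a b (i2 d hd) = a * b := by
  refine ⟨by simp [vf], ?_, ?_⟩ <;> simp [vf, i0, i1, i2, Fin.ext_iff]

lemma vf_mem (hd : 2 ≤ d) (a b : ZMod 2) : eval (vf d hd a b) (F d) = 0 := by
  rw [eval_zero_iff d hd]
  obtain ⟨h0, h1, h2⟩ := vf_apply d hd a b
  refine ⟨?_, by rw [h0, h1, h2]⟩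
  intro i hi
  have e0 : i ≠ i0 d := by intro h; subst h; simp [i0] at hi
  have e1 : i ≠ i1 d hd := by intro h; subst h; simp [i1] at hi
  have e2 : i ≠ i2 d hd := by intro h; subst h; simp [i2] at hi
  simp [vf, e0, e1, e2]

lemma mem_eq_vf (hd : 2 ≤ d) (x : Fin (d+1) → ZMod 2) (hx : eval x (F d) = 0) :
    x = vf d hd (x (i0 d)) (x (i1 d hd)) := by
  rw [eval_zero_iff d hd] at hx
  funext i
  by_cases e0 : i = i0 d
  · subst e0; simp [vf]
  by_cases e1 : i = i1 d hd
  · subst e1; simp [vf, i0, i1, Fin.ext_iff]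
  by_cases e2 : i = i2 d hd
  · subst e2
    simp only [vf, i0, i1, i2, Fin.ext_iff]
    norm_num
    exact hx.2
  · have h3 : 3 ≤ (i : ℕ) := by
      have v0 : (i : ℕ) ≠ 0 := fun h => e0 (Fin.ext (by simpa [i0] using h))
      have v1 : (i : ℕ) ≠ 1 := fun h => e1 (Fin.ext (by simpa [i1] using h))
      have v2 : (i : ℕ) ≠ 2 := fun h => e2 (Fin.ext (by simpa [i2] using h))
      omega
    rw [hx.1 i h3]
    simp [vf, e0, e1, e2]

lemma vf_inj (hd : 2 ≤ d) {a b a' b' : ZMod 2} (h : vf d hd a b = vf d hd a' b') :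
    a = a' ∧ b = b' := by
  obtain ⟨h0, h1, -⟩ := vf_apply d hd a b
  obtain ⟨h0', h1', -⟩ := vf_apply d hd a' b'
  constructor
  · rw [← h0, ← h0', h]
  · rw [← h1, ← h1', h]

end Stmt14Aux

open Stmt14Aux in
theorem stmt_14 (d : ℕ) (hd : 2 ≤ d) :
    ∃ f : MvPolynomial (Fin (d + 1)) (ZMod 2),
      f.IsHomogeneous d ∧
      ({x : Fin (d + 1) → ZMod 2 | MvPolynomial.eval x f = 0}).ncard = 4 ∧
      ¬∃ (W : Submodule (ZMod 2) (Fin (d + 1) → ZMod 2)) (v : Fin (d + 1) → ZMod 2),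
        {x : Fin (d + 1) → ZMod 2 | MvPolynomial.eval x f = 0}
          = (fun x => v + x) '' (W : Set (Fin (d + 1) → ZMod 2)) := by
  refine ⟨F d, homog d hd, ?_, ?_⟩
  · -- ncard = 4
    have hset : {x : Fin (d + 1) → ZMod 2 | MvPolynomial.eval x (F d) = 0}
        = {vf d hd 0 0, vf d hd 0 1, vf d hd 1 0, vf d hd 1 1} := by
      ext x
      simp only [Set.mem_setOf_eq, Set.mem_insert_iff, Set.mem_singleton_iff]
      constructor
      · intro hx
        have := mem_eq_vf d hd x hx
        rcases zmod2_cases (x (i0 d)) with h0 | h0 <;>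
          rcases zmod2_cases (x (i1 d hd)) with h1 | h1 <;>
          rw [h0, h1] at this
        · exact Or.inl this
        · exact Or.inr (Or.inl this)
        · exact Or.inr (Or.inr (Or.inl this))
        · exact Or.inr (Or.inr (Or.inr this))
      · rintro (rfl | rfl | rfl | rfl) <;> exact vf_mem d hd _ _
    rw [hset]
    have hne : ∀ (a b a' b' : ZMod 2), (a, b) ≠ (a', b') → vf d hd a b ≠ vf d hd a' b' := by
      intro a b a' b' hne h
      obtain ⟨h1, h2⟩ := vf_inj d hd h
      exact hne (by rw [h1, h2])
    rw [Set.ncard_insert_of_notMem, Set.ncard_insert_of_notMem,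
      Set.ncard_pair (hne 1 0 1 1 (by decide))]
    · simp only [Set.mem_insert_iff, Set.mem_singleton_iff, not_or]
      exact ⟨hne 0 1 1 0 (by decide), hne 0 1 1 1 (by decide)⟩
    · simp only [Set.mem_insert_iff, Set.mem_singleton_iff, not_or]
      exact ⟨hne 0 0 0 1 (by decide), hne 0 0 1 0 (by decide), hne 0 0 1 1 (by decide)⟩
  · -- not affine
    rintro ⟨W, v, hWv⟩
    have hchar2 : ∀ y : Fin (d+1) → ZMod 2, y + y = 0 := by
      intro y; funext i; exact CharTwo.add_self_eq_zero _
    have hz : (0 : Fin (d+1) → ZMod 2) ∈ {x : Fin (d + 1) → ZMod 2 | MvPolynomial.eval x (F d) = 0} := by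
      rw [Set.mem_setOf_eq, eval_zero_iff d hd]
      simp
    have he0 : vf d hd 1 0 ∈ {x : Fin (d + 1) → ZMod 2 | MvPolynomial.eval x (F d) = 0} :=
      vf_mem d hd 1 0
    have he1 : vf d hd 0 1 ∈ {x : Fin (d + 1) → ZMod 2 | MvPolynomial.eval x (F d) = 0} :=
      vf_mem d hd 0 1
    rw [hWv] at hz he0 he1
    obtain ⟨w0, hw0, hw0e⟩ := hz
    obtain ⟨w1, hw1, hw1e⟩ := he0
    obtain ⟨w2, hw2, hw2e⟩ := he1
    replace hw0e : v + w0 = 0 := hw0e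
    replace hw1e : v + w1 = vf d hd 1 0 := hw1e
    replace hw2e : v + w2 = vf d hd 0 1 := hw2e
    have hvW : v ∈ W := by
      have hveq : v = w0 := by
        calc v = v + w0 + w0 := by rw [add_assoc, hchar2 w0, add_zero]
          _ = w0 := by rw [hw0e, zero_add]
      rw [hveq]; exact hw0
    have hyW : vf d hd 1 0 + vf d hd 0 1
        ∈ (fun x => v + x) '' (W : Set (Fin (d + 1) → ZMod 2)) := by
      refine ⟨v + w1 + w2, W.add_mem (W.add_mem hvW hw1) hw2, ?_⟩
      show v + (v + w1 + w2) = vf d hd 1 0 + vf d hd 0 1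
      rw [← hw1e, ← hw2e]
      have e1 : v + (v + w1 + w2) = (v + v) + (w1 + w2) := by abel
      have e2 : (v + w1) + (v + w2) = (v + v) + (w1 + w2) := by abel
      rw [e1, e2]
    rw [← hWv, Set.mem_setOf_eq, eval_zero_iff d hd] at hyW
    obtain ⟨-, hcond⟩ := hyW
    obtain ⟨a0, a1, a2⟩ := vf_apply d hd 1 0
    obtain ⟨b0, b1, b2⟩ := vf_apply d hd 0 1
    simp only [Pi.add_apply, a0, a1, a2, b0, b1, b2] at hcond
    norm_num at hcond
end

section
/- For every integer d ≥ 2 there exists a homogeneous form f of degree d in F_2[x_1,...,x_{d+2}] such that f has exactly 6 zeros in F_2^{d+2}; in particular its zero set is not an affine subspace since 6 is not a power of 2. -/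
open MvPolynomial Finset
namespace Stmt15

lemma two_cases (a : ZMod 2) : a = 0 ∨ a = 1 := by revert a; decide

lemma pow_self (a : ZMod 2) {k : ℕ} (hk : k ≠ 0) : a ^ k = a := by
  rcases two_cases a with rfl | rfl
  · rw [zero_pow hk]
  · rw [one_pow]

def e1 {n : ℕ} : Fin (n + 1) → ZMod 2 := fun i => if i = 0 then 1 else 0

lemma e1_ne_zero {n : ℕ} : (e1 : Fin (n+1) → ZMod 2) ≠ 0 := by
  intro h
  have := congrFun h 0
  simp [e1] at this

lemma snoc_injective {n : ℕ} (c : ZMod 2) :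
    Function.Injective (fun x : Fin n → ZMod 2 => (Fin.snoc x c : Fin (n+1) → ZMod 2)) := by
  intro a b h
  funext i
  have := congrFun h (Fin.castSucc i)
  simpa using this

lemma snoc_eq_snoc_iff {n : ℕ} (x y : Fin n → ZMod 2) (s t : ZMod 2) :
    (Fin.snoc x s : Fin (n+1) → ZMod 2) = Fin.snoc y t ↔ x = y ∧ s = t := by
  constructor
  · intro h
    refine ⟨funext fun i => ?_, ?_⟩
    · have := congrFun h i.castSucc; simpa using this
    · have := congrFun h (Fin.last n); simpa using this
  · rintro ⟨rfl, rfl⟩; rfl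

lemma snoc_zero {n : ℕ} : ((Fin.snoc (0 : Fin n → ZMod 2) (0 : ZMod 2) : Fin (n+1) → ZMod 2)) = 0 := by
  funext i
  induction i using Fin.lastCases with
  | last => simp
  | cast j => simp

lemma snoc_e1 {n : ℕ} : ((Fin.snoc (e1 : Fin (n+1) → ZMod 2) (0 : ZMod 2) : Fin (n+2) → ZMod 2)) = e1 := by
  funext i
  induction i using Fin.lastCases with
  | last => simp [e1, Fin.ext_iff]
  | cast j => simp [e1]

/-- a homogeneous monomial of degree `D` with support exactly `S` (for `1 ≤ S.card ≤ D`). -/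
noncomputable def padX {m : ℕ} (D : ℕ) (S : Finset (Fin m)) : MvPolynomial (Fin m) (ZMod 2) :=
  if h : S.Nonempty then X (S.min' h) ^ (D + 1 - S.card) * ∏ i ∈ S.erase (S.min' h), X i else 0

lemma padX_homog {m D : ℕ} (S : Finset (Fin m)) (h1 : S.card ≤ D) :
    (padX D S).IsHomogeneous D := by
  unfold padX
  split_ifs with h
  · have hc1 : 1 ≤ S.card := Finset.card_pos.mpr h
    have hprod : (∏ i ∈ S.erase (S.min' h), (X i : MvPolynomial (Fin m) (ZMod 2))).IsHomogeneous
        (S.card - 1) := by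
      have := IsHomogeneous.prod (S.erase (S.min' h))
        (fun i => (X i : MvPolynomial (Fin m) (ZMod 2))) (fun _ => 1)
        (fun i _ => isHomogeneous_X _ _)
      simpa [Finset.card_erase_of_mem (S.min'_mem h)] using this
    have := (isHomogeneous_X_pow (R := ZMod 2) (S.min' h) (D + 1 - S.card)).mul hprod
    have harith : (D + 1 - S.card) + (S.card - 1) = D := by omega
    rwa [harith] at this
  · exact isHomogeneous_zero _ _ _

lemma padX_eval {m D : ℕ} (S : Finset (Fin m)) (hne : S.Nonempty) (hc : S.card ≤ D)
    (v : Fin m → ZMod 2) : eval v (padX D S) = ∏ i ∈ S, v i := by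
  have hc1 : 1 ≤ S.card := Finset.card_pos.mpr hne
  unfold padX
  rw [dif_pos hne, map_mul, map_pow, eval_X, map_prod,
    pow_self _ (by omega : D + 1 - S.card ≠ 0)]
  simp only [eval_X]
  exact Finset.mul_prod_erase S v (S.min'_mem hne)

/-- index set: all but the first and last variable -/
def Tset (d : ℕ) : Finset (Fin (d+3)) := univ \ {0, Fin.last (d+2)}

lemma mem_Tset {d : ℕ} (i : Fin (d+3)) : i ∈ Tset d ↔ i ≠ 0 ∧ i ≠ Fin.last (d+2) := by
  simp [Tset, not_or]

lemma Tset_card (d : ℕ) : (Tset d).card = d + 1 := by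
  rw [Tset, card_sdiff_of_subset (subset_univ _), card_univ, Fintype.card_fin]
  have h2 : ({0, Fin.last (d+2)} : Finset (Fin (d+3))).card = 2 := by
    rw [card_insert_of_notMem, card_singleton]
    simp [Fin.ext_iff]
  omega

noncomputable def orPoly (d : ℕ) : MvPolynomial (Fin (d+3)) (ZMod 2) :=
  ∑ S ∈ (Tset d).powerset, padX (d+1) S

lemma orPoly_homog (d : ℕ) : (orPoly d).IsHomogeneous (d+1) :=
  IsHomogeneous.sum _ _ _ (fun S hS => padX_homog S
    (le_trans (card_le_card (mem_powerset.mp hS)) (le_of_eq (Tset_card d))))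

lemma orPoly_eval (d : ℕ) (v : Fin (d+3) → ZMod 2) :
    eval v (orPoly d) = (∏ i ∈ Tset d, (v i + 1)) + 1 := by
  have expand : (∏ i ∈ Tset d, (v i + 1)) = ∑ S ∈ (Tset d).powerset, ∏ i ∈ S, v i := by
    rw [Finset.prod_add]
    simp
  have hterm : ∀ S ∈ (Tset d).powerset, eval v (padX (d+1) S)
      = if S = ∅ then 0 else ∏ i ∈ S, v i := by
    intro S hS
    by_cases h : S = ∅
    · subst h; simp [padX]
    · rw [if_neg h]
      exact padX_eval S (nonempty_iff_ne_empty.mpr h)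
        (le_trans (card_le_card (mem_powerset.mp hS)) (le_of_eq (Tset_card d))) v
  have hemp : ∅ ∈ (Tset d).powerset := Finset.empty_mem_powerset _
  rw [orPoly, map_sum, Finset.sum_congr rfl hterm, expand,
    ← Finset.add_sum_erase _ _ hemp, ← Finset.add_sum_erase _ (fun S => ∏ i ∈ S, v i) hemp]
  have : ∀ S ∈ (Tset d).powerset.erase ∅,
      (if S = ∅ then (0 : ZMod 2) else ∏ i ∈ S, v i) = ∏ i ∈ S, v i := by
    intro S hS
    rw [if_neg (Finset.ne_of_mem_erase hS)]
  rw [Finset.sum_congr rfl this]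
  simp only [if_pos rfl, Finset.prod_empty, zero_add]
  rw [if_pos trivial, zero_add]
  have h11 : ∀ a : ZMod 2, a = 1 + a + 1 := by decide
  exact h11 _

noncomputable def stepPoly (d : ℕ) (f : MvPolynomial (Fin (d+2)) (ZMod 2)) :
    MvPolynomial (Fin (d+3)) (ZMod 2) :=
  rename Fin.castSucc f * X (Fin.last (d+2)) + X (Fin.last (d+2)) ^ (d+1) + orPoly d

lemma stepPoly_homog (d : ℕ) (f : MvPolynomial (Fin (d+2)) (ZMod 2))
    (hf : f.IsHomogeneous d) : (stepPoly d f).IsHomogeneous (d+1) :=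
  (((hf.rename_isHomogeneous).mul (isHomogeneous_X _ _)).add
    (isHomogeneous_X_pow _ _)).add (orPoly_homog d)

lemma stepPoly_eval (d : ℕ) (f : MvPolynomial (Fin (d+2)) (ZMod 2))
    (x : Fin (d+2) → ZMod 2) (t : ZMod 2) :
    eval (Fin.snoc x t : Fin (d+3) → ZMod 2) (stepPoly d f) =
      eval x f * t + t + ((∏ i ∈ Tset d, ((Fin.snoc x t : Fin (d+3) → ZMod 2) i + 1)) + 1) := by
  rw [stepPoly, map_add, map_add, map_mul, eval_rename, map_pow, eval_X, orPoly_eval,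
    pow_self _ (by omega : d + 1 ≠ 0)]
  have h1 : ((Fin.snoc x t : Fin (d+3) → ZMod 2) ∘ Fin.castSucc) = x := by
    funext i; simp
  have h2 : (Fin.snoc x t : Fin (d+3) → ZMod 2) (Fin.last (d+2)) = t := by simp
  rw [h1, h2]


lemma step (d : ℕ)
    (f : MvPolynomial (Fin (d+2)) (ZMod 2)) (Z : Finset (Fin (d+2) → ZMod 2))
    (hf : f.IsHomogeneous d) (hcard : Z.card = 6)
    (h0 : (0 : Fin (d+2) → ZMod 2) ∈ Z) (h1 : (e1 : Fin (d+2) → ZMod 2) ∈ Z)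
    (hset : {x : Fin (d+2) → ZMod 2 | eval x f = 0} = ↑Z) :
    ∃ (F : MvPolynomial (Fin (d+3)) (ZMod 2)) (Z' : Finset (Fin (d+3) → ZMod 2)),
      F.IsHomogeneous (d+1) ∧ Z'.card = 6 ∧ (0 : Fin (d+3) → ZMod 2) ∈ Z' ∧
      (e1 : Fin (d+3) → ZMod 2) ∈ Z' ∧
      {x : Fin (d+3) → ZMod 2 | eval x F = 0} = ↑Z' := by
  classical
  have hZmem : ∀ y, eval y f = 0 ↔ y ∈ Z := by
    intro y
    rw [← Finset.mem_coe, ← hset]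
    rfl
  set A : Finset (Fin (d+2) → ZMod 2) := {0, e1} with hA
  have hA_sub : A ⊆ Z := by
    rw [hA, insert_subset_iff, singleton_subset_iff]
    exact ⟨h0, h1⟩
  have hAcard : A.card = 2 := by
    rw [hA, card_insert_of_notMem, card_singleton]
    simp only [mem_singleton]
    exact fun h => e1_ne_zero h.symm
  have hmemA : ∀ x, x ∈ A ↔ (x = 0 ∨ x = e1) := by
    intro x; simp [hA]
  set Z' : Finset (Fin (d+3) → ZMod 2) :=
    A.image (fun x => (Fin.snoc x (0:ZMod 2) : Fin (d+3) → ZMod 2)) ∪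
    (Z \ A).image (fun x => (Fin.snoc x (1:ZMod 2) : Fin (d+3) → ZMod 2)) with hZ'
  have hZ'mem : ∀ (x : Fin (d+2) → ZMod 2) (t : ZMod 2),
      ((Fin.snoc x t : Fin (d+3) → ZMod 2) ∈ Z') ↔
      ((t = 0 ∧ (x = 0 ∨ x = e1)) ∨ (t = 1 ∧ x ∈ Z ∧ ¬(x = 0 ∨ x = e1))) := by
    intro x t
    rw [hZ', mem_union, mem_image, mem_image]
    constructor
    · rintro (⟨y, hy, heq⟩ | ⟨y, hy, heq⟩)
      · obtain ⟨rfl, rfl⟩ := (snoc_eq_snoc_iff y x 0 t).mp heq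
        exact Or.inl ⟨rfl, (hmemA y).mp hy⟩
      · obtain ⟨rfl, rfl⟩ := (snoc_eq_snoc_iff y x 1 t).mp heq
        rw [mem_sdiff, hmemA] at hy
        exact Or.inr ⟨rfl, hy⟩
    · rintro (⟨rfl, hx⟩ | ⟨rfl, hxZ, hxA⟩)
      · exact Or.inl ⟨x, (hmemA x).mpr hx, rfl⟩
      · exact Or.inr ⟨x, by rw [mem_sdiff, hmemA]; exact ⟨hxZ, hxA⟩, rfl⟩
  have hZ'card : Z'.card = 6 := by
    rw [hZ', card_union_of_disjoint, card_image_of_injective _ (snoc_injective 0),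
      card_image_of_injective _ (snoc_injective 1), hAcard, card_sdiff_of_subset hA_sub, hcard, hAcard]
    rw [Finset.disjoint_left]
    rintro a ha hb
    obtain ⟨y, _, rfl⟩ := mem_image.mp ha
    obtain ⟨z, _, heq⟩ := mem_image.mp hb
    have := (snoc_eq_snoc_iff z y 1 0).mp heq
    exact one_ne_zero this.2
  have h0' : (0 : Fin (d+3) → ZMod 2) ∈ Z' := by
    rw [← snoc_zero, hZ'mem]
    exact Or.inl ⟨rfl, Or.inl rfl⟩
  have h1' : (e1 : Fin (d+3) → ZMod 2) ∈ Z' := by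
    rw [← snoc_e1, hZ'mem]
    exact Or.inl ⟨rfl, Or.inr rfl⟩
  refine ⟨stepPoly d f, Z', stepPoly_homog d f hf, hZ'card, h0', h1', ?_⟩
  ext v
  rw [show v = (Fin.snoc (Fin.init v) (v (Fin.last (d+2))) : Fin (d+3) → ZMod 2) from
    (Fin.snoc_init_self v).symm]
  generalize Fin.init v = x
  generalize v (Fin.last (d+2)) = t
  rw [Set.mem_setOf_eq, Finset.mem_coe, stepPoly_eval, hZ'mem]
  -- analyze the product
  have hQiff : (∀ i ∈ Tset d, (Fin.snoc x t : Fin (d+3) → ZMod 2) i = 0) ↔ (x = 0 ∨ x = e1) := by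
    constructor
    · intro h
      rcases two_cases (x 0) with hx0 | hx0
      · left
        funext j
        by_cases hj : j = 0
        · rw [hj]; exact hx0
        · have hmem : (Fin.castSucc j) ∈ Tset d := by
            rw [mem_Tset]
            refine ⟨?_, (Fin.castSucc_lt_last j).ne⟩
            simpa using hj
          have := h _ hmem
          simpa using this
      · right
        funext j
        by_cases hj : j = 0
        · rw [hj]; simp [e1, hx0]
        · have hmem : (Fin.castSucc j) ∈ Tset d := by
            rw [mem_Tset]
            refine ⟨?_, (Fin.castSucc_lt_last j).ne⟩
            simpa using hj
          have := h _ hmem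
          simp only [Fin.snoc_castSucc] at this
          rw [this]
          simp [e1, hj]
    · intro hx i hi
      rw [mem_Tset] at hi
      obtain ⟨j, rfl⟩ : ∃ j : Fin (d+2), Fin.castSucc j = i := by
        rcases Fin.eq_castSucc_or_eq_last i with ⟨j, hj⟩ | hl
        · exact ⟨j, hj.symm⟩
        · exact absurd hl hi.2
      have hj0 : j ≠ 0 := by
        intro h; apply hi.1; rw [h]; rfl
      rcases hx with rfl | rfl
      · simp
      · simp [e1, hj0]
  have hP : (∏ i ∈ Tset d, ((Fin.snoc x t : Fin (d+3) → ZMod 2) i + 1))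
      = if (x = 0 ∨ x = e1) then 1 else 0 := by
    by_cases hQ : ∀ i ∈ Tset d, (Fin.snoc x t : Fin (d+3) → ZMod 2) i = 0
    · rw [if_pos (hQiff.mp hQ)]
      apply Finset.prod_eq_one
      intro i hi
      rw [hQ i hi, zero_add]
    · rw [if_neg (fun h => hQ (hQiff.mpr h))]
      push_neg at hQ
      obtain ⟨i, hi, hne⟩ := hQ
      apply Finset.prod_eq_zero hi
      rcases two_cases ((Fin.snoc x t : Fin (d+3) → ZMod 2) i) with h | h
      · exact absurd h hne
      · rw [h]; decide
  rw [hP]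
  rcases two_cases t with rfl | rfl
  · -- t = 0 case
    by_cases hor : (x = 0 ∨ x = e1)
    · rw [if_pos hor]
      simp only [mul_zero, zero_add, add_zero]
      constructor
      · intro _; exact Or.inl ⟨by trivial, hor⟩
      · intro _; decide
    · rw [if_neg hor]
      simp only [mul_zero, zero_add, add_zero]
      constructor
      · intro h; exact absurd h (by decide)
      · rintro (⟨_, h⟩ | ⟨h, _⟩)
        · exact absurd h hor
        · exact absurd h (by decide)
  · -- t = 1 case
    by_cases hor : (x = 0 ∨ x = e1)
    · rw [if_pos hor]
      have hx : eval x f = 0 := by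
        rw [hZmem]
        exact hA_sub ((hmemA x).mpr hor)
      rw [hx]
      constructor
      · intro h; exact absurd h (by decide)
      · rintro (⟨h, _⟩ | ⟨_, _, h⟩)
        · exact absurd h (by decide)
        · exact absurd hor h
    · rw [if_neg hor]
      have harith : ∀ a : ZMod 2, a * 1 + 1 + (0 + 1) = a := by decide
      rw [harith]
      rw [hZmem]
      constructor
      · intro h; exact Or.inr ⟨by trivial, h, hor⟩
      · rintro (⟨h, _⟩ | ⟨_, h, _⟩)
        · exact absurd h (by decide)
        · exact h





noncomputable def f2 : MvPolynomial (Fin 4) (ZMod 2) :=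
  X 2 * X 2 + X 3 * X 3 + X 2 * X 3 + X 0 * X 1

def Z2 : Finset (Fin 4 → ZMod 2) :=
  {![0,0,0,0], ![1,0,0,0], ![0,1,0,0], ![1,1,1,0], ![1,1,0,1], ![1,1,1,1]}

lemma funext4 (x : Fin 4 → ZMod 2) (a b c e : ZMod 2) :
    x = ![a,b,c,e] ↔ (x 0 = a ∧ x 1 = b ∧ x 2 = c ∧ x 3 = e) := by
  constructor
  · rintro rfl; exact ⟨rfl, rfl, rfl, rfl⟩
  · rintro ⟨h0, h1, h2, h3⟩
    funext i
    fin_cases i <;> simpa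

lemma f2_homog : f2.IsHomogeneous 2 := by
  have hx : ∀ i j : Fin 4, ((X i * X j : MvPolynomial (Fin 4) (ZMod 2))).IsHomogeneous 2 :=
    fun i j => (isHomogeneous_X _ _).mul (isHomogeneous_X _ _)
  exact (((hx 2 2).add (hx 3 3)).add (hx 2 3)).add (hx 0 1)

lemma Z2_card : Z2.card = 6 := by decide

lemma zero_mem_Z2 : (0 : Fin 4 → ZMod 2) ∈ Z2 := by
  have : (0 : Fin 4 → ZMod 2) = ![0,0,0,0] := by
    funext i; fin_cases i <;> rfl
  rw [this]; decide

lemma e1_mem_Z2 : (e1 : Fin 4 → ZMod 2) ∈ Z2 := by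
  have : (e1 : Fin 4 → ZMod 2) = ![1,0,0,0] := by
    funext i; fin_cases i <;> rfl
  rw [this]; decide

lemma f2_zeros : {x : Fin 4 → ZMod 2 | eval x f2 = 0} = ↑Z2 := by
  ext x
  have hkey : ∀ a b c e : ZMod 2,
      c * c + e * e + c * e + a * b = 0 ↔
      ((a=0∧b=0∧c=0∧e=0) ∨ (a=1∧b=0∧c=0∧e=0) ∨ (a=0∧b=1∧c=0∧e=0) ∨
       (a=1∧b=1∧c=1∧e=0) ∨ (a=1∧b=1∧c=0∧e=1) ∨ (a=1∧b=1∧c=1∧e=1)) := by decide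
  simp only [Set.mem_setOf_eq, f2, map_add, map_mul, eval_X, Z2, coe_insert,
    Set.mem_insert_iff, coe_singleton, Set.mem_singleton_iff, funext4]
  exact hkey (x 0) (x 1) (x 2) (x 3)


lemma key (d : ℕ) (hd : 2 ≤ d) :
    ∃ (f : MvPolynomial (Fin (d+2)) (ZMod 2)) (Z : Finset (Fin (d+2) → ZMod 2)),
      f.IsHomogeneous d ∧ Z.card = 6 ∧ (0 : Fin (d+2) → ZMod 2) ∈ Z ∧
      (e1 : Fin (d+2) → ZMod 2) ∈ Z ∧
      {x : Fin (d+2) → ZMod 2 | eval x f = 0} = ↑Z := by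
  induction d, hd using Nat.le_induction with
  | base => exact ⟨f2, Z2, f2_homog, Z2_card, zero_mem_Z2, e1_mem_Z2, f2_zeros⟩
  | succ n hn ih =>
    obtain ⟨f, Z, hf, hc, h0, h1, hs⟩ := ih
    exact step n f Z hf hc h0 h1 hs

lemma not_pow_two (k : ℕ) : 2 ^ k ≠ 6 := by
  intro h
  have hk : k < 3 := by
    by_contra hk
    push_neg at hk
    have : 2 ^ 3 ≤ 2 ^ k := Nat.pow_le_pow_right (by norm_num) hk
    omega
  interval_cases k <;> omega

end Stmt15

theorem stmt_15 (d : ℕ) (hd : 2 ≤ d) :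
    ∃ f : MvPolynomial (Fin (d + 2)) (ZMod 2),
      f.IsHomogeneous d ∧
      ({x : Fin (d + 2) → ZMod 2 | MvPolynomial.eval x f = 0}).ncard = 6 ∧
      ¬∃ (W : Submodule (ZMod 2) (Fin (d + 2) → ZMod 2)) (v : Fin (d + 2) → ZMod 2),
        {x : Fin (d + 2) → ZMod 2 | MvPolynomial.eval x f = 0}
          = (fun x => v + x) '' (W : Set (Fin (d + 2) → ZMod 2)) := by
  obtain ⟨f, Z, hf, hc, h0, h1, hs⟩ := Stmt15.key d hd
  have hn : ({x : Fin (d + 2) → ZMod 2 | MvPolynomial.eval x f = 0}).ncard = 6 := by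
    rw [hs, Set.ncard_coe_finset, hc]
  refine ⟨f, hf, hn, ?_⟩
  rintro ⟨W, v, hW⟩
  have hcard6 : ((fun x => v + x) '' (W : Set (Fin (d + 2) → ZMod 2))).ncard = 6 := by
    rw [← hW]; exact hn
  rw [Set.ncard_image_of_injective _ (add_right_injective v)] at hcard6
  have hnatW : Nat.card W = 6 := by
    rw [← Nat.card_coe_set_eq] at hcard6
    simpa using hcard6
  letI : Fintype W := Fintype.ofFinite _
  have hpow := Module.card_eq_pow_finrank (K := ZMod 2) (V := W)
  rw [ZMod.card, ← Nat.card_eq_fintype_card, hnatW] at hpow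
  exact Stmt15.not_pow_two _ hpow.symm
end

section
/- Let c(x_2,x_3,x_4) ∈ F_3[x_2,x_3,x_4] be a cubic form with no nontrivial zero over F_3. Then the cubic form j(x_1,x_2,x_3,x_4) = x_1^3 - x_2^2 x_1 + c(x_2,x_3,x_4) has exactly 9 zeros in F_3^4, and its zero set is not an affine subspace of F_3^4. -/
open MvPolynomial

theorem stmt_18 (c : MvPolynomial (Fin 3) (ZMod 3))
    (hc : c.IsHomogeneous 3)
    (hanis : ∀ x : Fin 3 → ZMod 3, MvPolynomial.eval x c = 0 → x = 0) :
    ({x : Fin 4 → ZMod 3 |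
        MvPolynomial.eval x
          (MvPolynomial.X 0 ^ 3 - MvPolynomial.X 1 ^ 2 * MvPolynomial.X 0 +
            MvPolynomial.rename Fin.succ c :
            MvPolynomial (Fin 4) (ZMod 3)) = 0}).ncard = 9 ∧
    ¬∃ (W : Submodule (ZMod 3) (Fin 4 → ZMod 3)) (v : Fin 4 → ZMod 3),
      {x : Fin 4 → ZMod 3 |
        MvPolynomial.eval x
          (MvPolynomial.X 0 ^ 3 - MvPolynomial.X 1 ^ 2 * MvPolynomial.X 0 +
            MvPolynomial.rename Fin.succ c :
            MvPolynomial (Fin 4) (ZMod 3)) = 0}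
        = (fun x => v + x) '' (W : Set (Fin 4 → ZMod 3)) := by
  have cube : ∀ a : ZMod 3, a ^ 3 = a := by decide
  have sq1 : ∀ a : ZMod 3, a ≠ 0 → a ^ 2 = 1 := by decide
  set S : Set (Fin 4 → ZMod 3) :=
    {x : Fin 4 → ZMod 3 |
        MvPolynomial.eval x
          (MvPolynomial.X 0 ^ 3 - MvPolynomial.X 1 ^ 2 * MvPolynomial.X 0 +
            MvPolynomial.rename Fin.succ c :
            MvPolynomial (Fin 4) (ZMod 3)) = 0} with hS
  have heval : ∀ x : Fin 4 → ZMod 3,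
      MvPolynomial.eval x
          (MvPolynomial.X 0 ^ 3 - MvPolynomial.X 1 ^ 2 * MvPolynomial.X 0 +
            MvPolynomial.rename Fin.succ c :
            MvPolynomial (Fin 4) (ZMod 3))
        = x 0 ^ 3 - x 1 ^ 2 * x 0 + MvPolynomial.eval (x ∘ Fin.succ) c := by
    intro x
    simp [MvPolynomial.eval_rename]
  have mem_iff : ∀ x : Fin 4 → ZMod 3,
      x ∈ S ↔ x 1 = 0 ∧ x 0 = - MvPolynomial.eval (x ∘ Fin.succ) c := by
    intro x
    rw [hS, Set.mem_setOf_eq, heval]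
    constructor
    · intro h
      by_cases h1 : x 1 = 0
      · refine ⟨h1, ?_⟩
        rw [h1, cube] at h
        linear_combination h
      · exfalso
        rw [sq1 _ h1, cube] at h
        have hE : MvPolynomial.eval (x ∘ Fin.succ) c = 0 := by linear_combination h
        have := hanis _ hE
        exact h1 (congrFun this 0)
    · rintro ⟨h1, h0⟩
      rw [cube, h1, h0]
      ring
  set d : ZMod 3 → ZMod 3 → ZMod 3 := fun s t => MvPolynomial.eval ![0, s, t] c with hd
  have tail_u : ∀ a s t : ZMod 3, ((![a, 0, s, t] : Fin 4 → ZMod 3) ∘ Fin.succ) = ![(0:ZMod 3), s, t] := by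
    intro a s t; funext i; fin_cases i <;> rfl
  have u_mem : ∀ s t : ZMod 3, (![-d s t, 0, s, t] : Fin 4 → ZMod 3) ∈ S := by
    intro s t
    rw [mem_iff]
    exact ⟨rfl, by rw [tail_u]; simp [hd]⟩
  have mem_eq : ∀ x ∈ S, x = (![-d (x 2) (x 3), 0, x 2, x 3] : Fin 4 → ZMod 3) := by
    intro x hx
    rw [mem_iff] at hx
    obtain ⟨h1, h0⟩ := hx
    have htail : x ∘ Fin.succ = ![(0:ZMod 3), x 2, x 3] := by
      funext i; fin_cases i <;> simp [h1] <;> rfl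
    funext i
    fin_cases i
    · simpa [hd, htail] using h0
    · simpa using h1
    · rfl
    · rfl
  constructor
  · have hrange : S = Set.range (fun p : ZMod 3 × ZMod 3 => (![-d p.1 p.2, 0, p.1, p.2] : Fin 4 → ZMod 3)) := by
      ext x
      constructor
      · intro hx; exact ⟨(x 2, x 3), (mem_eq x hx).symm⟩
      · rintro ⟨p, rfl⟩; exact u_mem p.1 p.2
    have hg : Function.Injective (fun p : ZMod 3 × ZMod 3 => (![-d p.1 p.2, 0, p.1, p.2] : Fin 4 → ZMod 3)) := by
      intro p q h
      have h2 := congrFun h 2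
      have h3 := congrFun h 3
      simp at h2 h3
      exact Prod.ext h2 h3
    rw [hrange, ← Set.image_univ, Set.ncard_image_of_injective _ hg, Set.ncard_univ]
    simp [Nat.card_eq_fintype_card]
  · rintro ⟨W, v, hWv⟩
    have h0S : (0 : Fin 4 → ZMod 3) ∈ S := by
      rw [mem_iff]
      refine ⟨rfl, ?_⟩
      have h1 : ((0 : Fin 4 → ZMod 3) ∘ Fin.succ) = 0 := rfl
      have h2 : MvPolynomial.eval (0 : Fin 3 → ZMod 3) c = 0 := by
        rw [MvPolynomial.eval_zero]
        rw [MvPolynomial.constantCoeff_eq]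
        simpa using hc.coeff_eq_zero (d := 0) (by simp)
      rw [h1, h2]
      rfl
    have hv : v ∈ W := by
      rw [hWv] at h0S
      obtain ⟨u, hu, huv⟩ := h0S
      have : v = -u := eq_neg_of_add_eq_zero_left huv
      rw [this]
      exact W.neg_mem hu
    have hSW : S = (W : Set (Fin 4 → ZMod 3)) := by
      rw [hWv]
      ext x
      simp only [Set.mem_image, SetLike.mem_coe]
      constructor
      · rintro ⟨u, hu, rfl⟩; exact W.add_mem hv hu
      · intro hx; exact ⟨x - v, W.sub_mem hx hv, by abel⟩
    have hadd : ∀ s t s' t' : ZMod 3, d (s + s') (t + t') = d s t + d s' t' := by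
      intro s t s' t'
      have hmemW : ∀ {x : Fin 4 → ZMod 3}, x ∈ S → x ∈ W := by
        intro x hx; rw [hSW] at hx; exact hx
      have h1 : (![-d s t, 0, s, t] : Fin 4 → ZMod 3) + ![-d s' t', 0, s', t'] ∈ S := by
        rw [hSW]
        exact W.add_mem (hmemW (u_mem s t)) (hmemW (u_mem s' t'))
      have hsum : (![-d s t, 0, s, t] : Fin 4 → ZMod 3) + ![-d s' t', 0, s', t']
          = ![-(d s t + d s' t'), 0, s + s', t + t'] := by
        funext i; fin_cases i <;> simp <;> ring
      rw [hsum, mem_iff] at h1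
      obtain ⟨-, h0⟩ := h1
      rw [tail_u] at h0
      simp only [Matrix.cons_val_zero] at h0
      have h2 := neg_injective h0
      simpa [hd] using h2.symm
    have hsplit : ∀ s t : ZMod 3, d s t = d s 0 + d 0 t := by
      intro s t
      simpa using hadd s 0 0 t
    have e2 : (2 : ZMod 3) = 1 + 1 := by decide
    have h20 : d 2 0 = d 1 0 + d 1 0 := by
      rw [e2]
      simpa using hadd 1 0 1 0
    have h02 : d 0 2 = d 0 1 + d 0 1 := by
      rw [e2]
      simpa using hadd 0 1 0 1
    have dzero : ∀ s t : ZMod 3, d s t = 0 → s = 0 ∧ t = 0 := by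
      intro s t h
      have h3 := hanis ![0, s, t] (by simpa [hd] using h)
      exact ⟨by simpa using congrFun h3 1, by simpa using congrFun h3 2⟩
    have ha : d 1 0 ≠ 0 := fun h => one_ne_zero (dzero 1 0 h).1
    have hb : d 0 1 ≠ 0 := fun h => one_ne_zero (dzero 0 1 h).2
    have trich : ∀ z : ZMod 3, z = 0 ∨ z = 1 ∨ z = 2 := by decide
    have two_ne : (2 : ZMod 3) ≠ 0 := by decide
    rcases trich (d 1 0) with h|h|h
    · exact ha h
    · rcases trich (d 0 1) with h'|h'|h'
      · exact hb h'
      · have hz : d 1 2 = 0 := by rw [hsplit 1 2, h02, h, h']; decide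
        exact one_ne_zero (dzero 1 2 hz).1
      · have hz : d 2 2 = 0 := by rw [hsplit 2 2, h20, h02, h, h']; decide
        exact two_ne (dzero 2 2 hz).1
    · rcases trich (d 0 1) with h'|h'|h'
      · exact hb h'
      · have hz : d 1 1 = 0 := by rw [hsplit 1 1, h, h']; decide
        exact one_ne_zero (dzero 1 1 hz).1
      · have hz : d 2 1 = 0 := by rw [hsplit 2 1, h20, h, h']; decide
        exact one_ne_zero (dzero 2 1 hz).2
end

section
/- Let q ≥ 3, n - d ≥ 2, and v = n+1-d. If q ≥ 3v+2, then ((q^(n+1-d)-1)/(q-1))·(q/(n+2-d)) > 2q^(n-d) + (q-2)q; if q ≤ 2v, then ((q^(n+1-d)-1)/(q-1))·(q/(n+2-d)) < 2q^(n-d) + (q-2)q. -/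
lemma aux1 (Q M P : ℝ) (hQ : 3 ≤ Q) (hM : 2 ≤ M) (hP : Q ≤ P)
    (hq : 3 * M + 5 ≤ Q) :
    (P * Q ^ 2 - 1) / (Q - 1) * (Q / (M + 2)) > 2 * (P * Q) + (Q - 2) * Q := by
  have h1 : (0:ℝ) < (Q - 1) * (M + 2) := by nlinarith
  rw [gt_iff_lt, div_mul_div_comm, lt_div_iff₀ h1]
  have key : (M + 2) * (2 * P + Q - 2) + 2 * (M + 2) ≤ P * (Q + 1) := by
    nlinarith [mul_nonneg (by linarith : (0:ℝ) ≤ P) (by linarith : (0:ℝ) ≤ Q - 3*M - 5),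
      mul_nonneg (by linarith : (0:ℝ) ≤ P - Q) (by linarith : (0:ℝ) ≤ M + 2)]
  have key2 : (Q - 1) * ((M + 2) * (2 * P + Q - 2)) < P * Q ^ 2 - 1 := by
    have h2 := mul_le_mul_of_nonneg_left key (by linarith : (0:ℝ) ≤ Q - 1)
    nlinarith [h2]
  calc (2 * (P * Q) + (Q - 2) * Q) * ((Q - 1) * (M + 2))
      = Q * ((Q - 1) * ((M + 2) * (2 * P + Q - 2))) := by ring
    _ < Q * (P * Q ^ 2 - 1) := by
        exact mul_lt_mul_of_pos_left key2 (by linarith)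
    _ = (P * Q ^ 2 - 1) * Q := by ring

lemma aux2 (Q M P : ℝ) (hQ : 3 ≤ Q) (hM : 2 ≤ M) (hP : Q ≤ P)
    (hq : Q ≤ 2 * M + 2) :
    (P * Q ^ 2 - 1) / (Q - 1) * (Q / (M + 2)) < 2 * (P * Q) + (Q - 2) * Q := by
  have h1 : (0:ℝ) < (Q - 1) * (M + 2) := by nlinarith
  rw [div_mul_div_comm, div_lt_iff₀ h1]
  have key2 : P * Q ^ 2 - 1 < (Q - 1) * ((M + 2) * (2 * P + Q - 2)) := by
    nlinarith [mul_nonneg (mul_nonneg (by linarith : (0:ℝ) ≤ Q - 1)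
        (by linarith : (0:ℝ) ≤ P)) (by linarith : (0:ℝ) ≤ 2*M + 2 - Q),
      mul_nonneg (by linarith : (0:ℝ) ≤ Q - 2) (by linarith : (0:ℝ) ≤ P),
      mul_nonneg (mul_nonneg (by linarith : (0:ℝ) ≤ Q - 1)
        (by linarith : (0:ℝ) ≤ M + 2)) (by linarith : (0:ℝ) ≤ Q - 2)]
  calc (P * Q ^ 2 - 1) * Q = Q * (P * Q ^ 2 - 1) := by ring
    _ < Q * ((Q - 1) * ((M + 2) * (2 * P + Q - 2))) :=
        mul_lt_mul_of_pos_left key2 (by linarith)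
    _ = (2 * (P * Q) + (Q - 2) * Q) * ((Q - 1) * (M + 2)) := by ring

theorem stmt_19 (q n d v : ℕ) (hq : 3 ≤ q) (hnd : d + 2 ≤ n)
    (hv : v = n + 1 - d) :
    (3 * v + 2 ≤ q →
      ((q : ℝ) ^ (n + 1 - d) - 1) / ((q : ℝ) - 1) * ((q : ℝ) / (n + 2 - d)) >
        2 * (q : ℝ) ^ (n - d) + ((q : ℝ) - 2) * q) ∧
    (q ≤ 2 * v →
      ((q : ℝ) ^ (n + 1 - d) - 1) / ((q : ℝ) - 1) * ((q : ℝ) / (n + 2 - d)) <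
        2 * (q : ℝ) ^ (n - d) + ((q : ℝ) - 2) * q) := by
  have hd : d ≤ n := by omega
  set m := n - d with hm
  have hm2 : 2 ≤ m := by omega
  have e1 : n + 1 - d = m + 1 := by omega
  have hQ3 : (3:ℝ) ≤ (q:ℝ) := by exact_mod_cast hq
  have hM2 : (2:ℝ) ≤ (m:ℝ) := by exact_mod_cast hm2
  have ecast : ((n:ℝ) + 2 - (d:ℝ)) = (m:ℝ) + 2 := by
    have : (m:ℝ) = (n:ℝ) - (d:ℝ) := by rw [hm]; push_cast [hd]; ring
    rw [this]; ring
  have epow1 : (q:ℝ) ^ (n + 1 - d) = (q:ℝ) ^ (m - 1) * (q:ℝ) ^ 2 := by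
    rw [e1, ← pow_add]; congr 1; omega
  have epow2 : (q:ℝ) ^ (n - d) = (q:ℝ) ^ (m - 1) * (q:ℝ) := by
    rw [← hm, ← pow_succ]; congr 1; omega
  have hP : (q:ℝ) ≤ (q:ℝ) ^ (m - 1) := by
    calc (q:ℝ) = (q:ℝ)^1 := (pow_one _).symm
    _ ≤ (q:ℝ)^(m-1) := pow_le_pow_right₀ (by linarith) (by omega)
  constructor
  · intro h
    have h' : 3 * (m + 1) + 2 ≤ q := by omega
    have hq' : 3 * (m:ℝ) + 5 ≤ (q:ℝ) := by
      have := (Nat.cast_le (α := ℝ)).2 h'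
      push_cast at this; linarith
    rw [epow1, epow2, ecast]
    exact aux1 _ _ _ hQ3 hM2 hP hq'
  · intro h
    have h' : q ≤ 2 * (m + 1) := by omega
    have hq' : (q:ℝ) ≤ 2 * (m:ℝ) + 2 := by
      have := (Nat.cast_le (α := ℝ)).2 h'
      push_cast at this; linarith
    rw [epow1, epow2, ecast]
    exact aux2 _ _ _ hQ3 hM2 hP hq'
end
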